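/- arXiv:2009.02125 — 3 statements merged into one kernel-verified Lean document; each statement's English description precedes it below -/
import Mathlib

section
/- For a permutation w in the symmetric group S_n, the equality ℓ(w) = |supp(w)| holds (equivalently, some—hence every—reduced decomposition of w consists of pairwise distinct letters) if and only if w avoids both the pattern 321 and the pattern 3412. -/
/-- `simpleT n i` is the adjacent transposition `sᵢ = (i, i+1)` (one-indexed values),
acting on `{1, …, n}` represented (zero-indexed) by `Fin n`.  It is the identity
permutation when `i` is outside the valid range `1 ≤ i ≤ n - 1`. -/
def simpleT (n : ℕ) (i : ℕ) : Equiv.Perm (Fin n) :=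
  if h : 1 ≤ i ∧ i < n then Equiv.swap ⟨i - 1, by omega⟩ ⟨i, h.2⟩ else 1

/-- The (Coxeter) length `ℓ(w)`: the minimal number of adjacent transpositions whose
product is `w`. -/
noncomputable def permLen (n : ℕ) (w : Equiv.Perm (Fin n)) : ℕ :=
  sInf {l : ℕ | ∃ word : List ℕ, word.length = l ∧ (word.map (simpleT n)).prod = w}

/-- `word` is a reduced decomposition of `w`: its product is `w` and its length is `ℓ(w)`. -/
def IsReducedWord (n : ℕ) (word : List ℕ) (w : Equiv.Perm (Fin n)) : Prop :=
  (word.map (simpleT n)).prod = w ∧ word.length = permLen n w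

/-- The support of `w`: the set of letters `i` such that `sᵢ` appears in some reduced
decomposition of `w`. -/
def permSupp (n : ℕ) (w : Equiv.Perm (Fin n)) : Set ℕ :=
  {i | ∃ word : List ℕ, IsReducedWord n word w ∧ i ∈ word}

/-- Bruhat order: `v ≤ w` iff some reduced decomposition of `v` is a subword of some
reduced decomposition of `w`. -/
def bruhatLE (n : ℕ) (v w : Equiv.Perm (Fin n)) : Prop :=
  ∃ wordv wordw : List ℕ, IsReducedWord n wordv v ∧ IsReducedWord n wordw w ∧
    wordv.Sublist wordw

/-- Strict Bruhat order. -/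
def bruhatLT (n : ℕ) (v w : Equiv.Perm (Fin n)) : Prop :=
  bruhatLE n v w ∧ v ≠ w

/-- An occurrence of the pattern `p ∈ S_k` in `w ∈ S_n`: a strictly increasing sequence
`j` of indices such that the entries of `w` along `j` are in the same relative order
as the entries of `p`. -/
def IsPatternOcc {n k : ℕ} (w : Equiv.Perm (Fin n)) (p : Equiv.Perm (Fin k))
    (j : Fin k → Fin n) : Prop :=
  StrictMono j ∧ ∀ a b : Fin k, w (j a) < w (j b) ↔ p a < p b

/-- `w` contains the pattern `p`. -/
def ContainsPattern {n k : ℕ} (w : Equiv.Perm (Fin n)) (p : Equiv.Perm (Fin k)) : Prop :=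
  ∃ j : Fin k → Fin n, IsPatternOcc w p j

/-- `w` avoids the pattern `p`. -/
def AvoidsPattern {n k : ℕ} (w : Equiv.Perm (Fin n)) (p : Equiv.Perm (Fin k)) : Prop :=
  ¬ ContainsPattern w p

/-- `w` contains the pattern `p` exactly once. -/
def ContainsPatternOnce {n k : ℕ} (w : Equiv.Perm (Fin n)) (p : Equiv.Perm (Fin k)) : Prop :=
  ∃! j : Fin k → Fin n, IsPatternOcc w p j

/-- The number of occurrences of the pattern `p` in `w`. -/
noncomputable def numOcc {n k : ℕ} (w : Equiv.Perm (Fin n)) (p : Equiv.Perm (Fin k)) : ℕ :=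
  Set.ncard {j : Fin k → Fin n | IsPatternOcc w p j}

/-- The pattern `321` (one-line notation `1↦3, 2↦2, 3↦1`), as a permutation of `Fin 3`. -/
def pattern321 : Equiv.Perm (Fin 3) := Equiv.swap 0 2

/-- The pattern `3412` (one-line notation `1↦3, 2↦4, 3↦1, 4↦2`). -/
def pattern3412 : Equiv.Perm (Fin 4) := Equiv.swap 0 2 * Equiv.swap 1 3

/-- The pattern `4231` (one-line notation `1↦4, 2↦2, 3↦3, 4↦1`). -/
def pattern4231 : Equiv.Perm (Fin 4) := Equiv.swap 0 3

/-- The pattern `4321` (one-line notation `1↦4, 2↦3, 3↦2, 4↦1`). -/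
def pattern4321 : Equiv.Perm (Fin 4) := Equiv.swap 0 3 * Equiv.swap 1 2

/-- The point `(u(1), …, u(n)) ∈ ℝⁿ` attached to a permutation `u` (one-indexed values). -/
def permPoint (n : ℕ) (u : Equiv.Perm (Fin n)) : Fin n → ℝ :=
  fun k => ((u k : ℕ) : ℝ) + 1

/-- The Bruhat interval polytope `Q_{v,w}`: the convex hull of the points
`(u(1), …, u(n))` for all `u` with `v ≤ u ≤ w` in Bruhat order. -/
noncomputable def BIP (n : ℕ) (v w : Equiv.Perm (Fin n)) : Set (Fin n → ℝ) :=
  convexHull ℝ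
    {x | ∃ u : Equiv.Perm (Fin n), bruhatLE n v u ∧ bruhatLE n u w ∧ x = permPoint n u}

/-- A face of a polytope `P`: a convex extreme subset of `P`. -/
def IsFaceOf {E : Type*} [AddCommGroup E] [Module ℝ E] (P F : Set E) : Prop :=
  IsExtreme ℝ P F ∧ Convex ℝ F

/-- Combinatorial equivalence of two polytopes: an inclusion-preserving (in both
directions) bijection between their face lattices. -/
def CombEquiv {E F : Type*} [AddCommGroup E] [Module ℝ E] [AddCommGroup F] [Module ℝ F]
    (P : Set E) (Q : Set F) : Prop :=
  ∃ e : {A : Set E // IsFaceOf P A} ≃ {B : Set F // IsFaceOf Q B},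
    ∀ A B : {A : Set E // IsFaceOf P A}, A.1 ⊆ B.1 ↔ (e A).1 ⊆ (e B).1

/-- The transposition `(i, j)` (one-indexed values, `1 ≤ i < j ≤ n`), acting on
`{1, …, n}` represented by `Fin n`; identity for invalid input. -/
def transpPerm (n i j : ℕ) : Equiv.Perm (Fin n) :=
  if h : 1 ≤ i ∧ i < j ∧ j ≤ n then Equiv.swap ⟨i - 1, by omega⟩ ⟨j - 1, by omega⟩ else 1

/-- `T̄(u,[v,w])`: the set of transpositions `(i,j)`, `i < j`, with
`u < u·(i,j) ≤ w` and `ℓ(u·(i,j)) = ℓ(u) + 1`. -/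
def upperT (n : ℕ) (u v w : Equiv.Perm (Fin n)) : Set (ℕ × ℕ) :=
  {p | 1 ≤ p.1 ∧ p.1 < p.2 ∧ p.2 ≤ n ∧
    bruhatLT n u (u * transpPerm n p.1 p.2) ∧ bruhatLE n (u * transpPerm n p.1 p.2) w ∧
    permLen n (u * transpPerm n p.1 p.2) = permLen n u + 1}

/-- `T̲(u,[v,w])`: the set of transpositions `(i,j)`, `i < j`, with
`v ≤ u·(i,j) < u` and `ℓ(u·(i,j)) = ℓ(u) - 1`. -/
def lowerT (n : ℕ) (u v w : Equiv.Perm (Fin n)) : Set (ℕ × ℕ) :=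
  {p | 1 ≤ p.1 ∧ p.1 < p.2 ∧ p.2 ≤ n ∧
    bruhatLE n v (u * transpPerm n p.1 p.2) ∧ bruhatLT n (u * transpPerm n p.1 p.2) u ∧
    permLen n (u * transpPerm n p.1 p.2) + 1 = permLen n u}

/-- The permutohedron `Perm₂ ⊂ ℝ³`, a hexagon. -/
noncomputable def Perm2Hex : Set (Fin 3 → ℝ) :=
  convexHull ℝ {x | ∃ σ : Equiv.Perm (Fin 3), x = permPoint 3 σ}

/-- The action of `s_r` on one-indexed letters: swaps `r` and `r + 1`. -/
def srNat (r x : ℕ) : ℕ := if x = r then r + 1 else if x = r + 1 then r else x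

set_option maxRecDepth 8000
set_option maxHeartbeats 1600000

namespace Stmt2Aux

variable {n : ℕ}

def invF (w : Equiv.Perm (Fin n)) : Finset (Fin n × Fin n) :=
  Finset.univ.filter fun x => x.1 < x.2 ∧ w x.2 < w x.1

def inv (w : Equiv.Perm (Fin n)) : ℕ := (invF w).card

def CsetF (w : Equiv.Perm (Fin n)) : Finset ℕ :=
  (Finset.range n).filter fun i => 1 ≤ i ∧ ∃ a : Fin n, a.val < i ∧ i ≤ (w a).val

lemma swap_val {v : ℕ} (hv : v + 1 < n) (z : Fin n) :
    ((Equiv.swap (⟨v, by omega⟩ : Fin n) ⟨v + 1, hv⟩) z).val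
      = if z.val = v then v + 1 else if z.val = v + 1 then v else z.val := by
  rcases z with ⟨zv, hz⟩
  rw [Equiv.swap_apply_def]
  simp only [Fin.ext_iff]
  split_ifs <;> simp_all

lemma inv_swap_asc {v : ℕ} (hv : v + 1 < n) (u : Equiv.Perm (Fin n))
    (h : (u⁻¹ ⟨v, by omega⟩ : Fin n) < u⁻¹ ⟨v + 1, hv⟩) :
    inv (Equiv.swap (⟨v, by omega⟩ : Fin n) ⟨v + 1, hv⟩ * u) = inv u + 1 := by
  classical
  set pa := u⁻¹ (⟨v, by omega⟩ : Fin n) with hpa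
  set pb := u⁻¹ (⟨v + 1, hv⟩ : Fin n) with hpb
  have hvk : pa.val < pb.val := h
  have c1 : ∀ x : Fin n, (x.val = pa.val ↔ (u x).val = v) := by
    intro x
    rw [Fin.val_eq_val, hpa, Equiv.Perm.eq_inv_iff_eq]
    exact Fin.ext_iff
  have c2 : ∀ x : Fin n, (x.val = pb.val ↔ (u x).val = v + 1) := by
    intro x
    rw [Fin.val_eq_val, hpb, Equiv.Perm.eq_inv_iff_eq]
    exact Fin.ext_iff
  have hmem : (pa, pb) ∉ invF u := by
    simp only [invF, Finset.mem_filter, Finset.mem_univ, true_and, not_and]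
    intro _
    have h1 : u pa = ⟨v, by omega⟩ := u.apply_symm_apply _
    have h2 : u pb = ⟨v + 1, hv⟩ := u.apply_symm_apply _
    rw [h1, h2]
    simp [Fin.lt_def]
  have hkey : invF (Equiv.swap (⟨v, by omega⟩ : Fin n) ⟨v + 1, hv⟩ * u)
      = insert (pa, pb) (invF u) := by
    ext ⟨x1, x2⟩
    simp only [invF, Finset.mem_filter, Finset.mem_univ, true_and, Finset.mem_insert,
      Equiv.Perm.mul_apply, Prod.mk.injEq, Fin.lt_def, Fin.ext_iff]
    rw [swap_val hv (u x1), swap_val hv (u x2)]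
    have d1 := c1 x1; have d2 := c2 x1; have d3 := c1 x2; have d4 := c2 x2
    split_ifs <;> omega
  rw [inv, inv, hkey, Finset.card_insert_of_notMem hmem]


lemma inv_swap_desc {v : ℕ} (hv : v + 1 < n) (u : Equiv.Perm (Fin n))
    (h : (u⁻¹ ⟨v + 1, hv⟩ : Fin n) < u⁻¹ ⟨v, by omega⟩) :
    inv (Equiv.swap (⟨v, by omega⟩ : Fin n) ⟨v + 1, hv⟩ * u) + 1 = inv u := by
  have hss : Equiv.swap (⟨v, by omega⟩ : Fin n) ⟨v + 1, hv⟩ *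
      (Equiv.swap (⟨v, by omega⟩ : Fin n) ⟨v + 1, hv⟩ * u) = u := by
    rw [← mul_assoc, Equiv.swap_mul_self, one_mul]
  have e1 : (Equiv.swap (⟨v, by omega⟩ : Fin n) ⟨v + 1, hv⟩ * u)⁻¹ (⟨v, by omega⟩ : Fin n)
      = u⁻¹ ⟨v + 1, hv⟩ := by
    rw [Equiv.Perm.inv_eq_iff_eq, Equiv.Perm.mul_apply, Equiv.Perm.inv_def, Equiv.apply_symm_apply]
    exact (Equiv.swap_apply_right _ _).symm
  have e2 : (Equiv.swap (⟨v, by omega⟩ : Fin n) ⟨v + 1, hv⟩ * u)⁻¹ (⟨v + 1, hv⟩ : Fin n)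
      = u⁻¹ ⟨v, by omega⟩ := by
    rw [Equiv.Perm.inv_eq_iff_eq, Equiv.Perm.mul_apply, Equiv.Perm.inv_def, Equiv.apply_symm_apply]
    exact (Equiv.swap_apply_left _ _).symm
  have key := inv_swap_asc hv (Equiv.swap (⟨v, by omega⟩ : Fin n) ⟨v + 1, hv⟩ * u)
    (by rw [e1, e2]; exact h)
  simp only [hss] at key
  omega

lemma simpleT_eq_swap {v : ℕ} (hv : v + 1 < n) :
    simpleT n (v + 1) = Equiv.swap (⟨v, by omega⟩ : Fin n) ⟨v + 1, hv⟩ := by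
  rw [simpleT, dif_pos ⟨by omega, hv⟩]
  congr 1

lemma inv_one : inv (1 : Equiv.Perm (Fin n)) = 0 := by
  rw [inv, Finset.card_eq_zero]
  ext ⟨a, b⟩
  simp only [invF, Finset.mem_filter, Finset.mem_univ, true_and, Finset.notMem_empty,
    iff_false, not_and, Equiv.Perm.one_apply]
  intro h1
  have h1' := (Finset.mem_filter.mp h1).2
  exact absurd h1'.2 (not_lt.mpr h1'.1.le)

lemma inv_mul_simpleT_le (j : ℕ) (u : Equiv.Perm (Fin n)) :
    inv (simpleT n j * u) ≤ inv u + 1 := by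
  by_cases hj : 1 ≤ j ∧ j < n
  · obtain ⟨v, rfl⟩ : ∃ v, j = v + 1 := ⟨j - 1, by omega⟩
    have hv : v + 1 < n := hj.2
    rw [simpleT_eq_swap hv]
    rcases lt_trichotomy ((u⁻¹ ⟨v, by omega⟩ : Fin n)) (u⁻¹ ⟨v + 1, hv⟩) with h | h | h
    · rw [inv_swap_asc hv u h]
    · exact absurd (u⁻¹.injective h) (by simp [Fin.ext_iff])
    · have := inv_swap_desc hv u h
      omega
  · rw [simpleT, dif_neg hj, one_mul]
    omega

lemma inv_le_length (word : List ℕ) :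
    inv ((word.map (simpleT n)).prod) ≤ word.length := by
  induction word with
  | nil => simp [inv_one]
  | cons j rest ih =>
    rw [List.map_cons, List.prod_cons, List.length_cons]
    calc inv (simpleT n j * (rest.map (simpleT n)).prod)
        ≤ inv ((rest.map (simpleT n)).prod) + 1 := inv_mul_simpleT_le _ _
      _ ≤ rest.length + 1 := by omega

set_option linter.deprecated false in
lemma eq_one_of_strictMono (w : Equiv.Perm (Fin n)) (hmono : StrictMono w) : w = 1 := by
  apply Equiv.ext
  intro x
  have h1 : StrictMono (id : Fin n → Fin n) := fun a b h => h
  have h2 : Set.range (w : Fin n → Fin n) = Set.range (id : Fin n → Fin n) := by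
    rw [Set.range_eq_univ.mpr w.surjective, Set.range_id]
  exact congrFun ((hmono.range_inj h1).mp h2) x

lemma eq_one_of_inv_zero (w : Equiv.Perm (Fin n)) (h : inv w = 0) : w = 1 := by
  have hF : invF w = ∅ := Finset.card_eq_zero.mp h
  apply eq_one_of_strictMono
  intro a b hab
  have : (a, b) ∉ invF w := hF ▸ Finset.notMem_empty _
  simp only [invF, Finset.mem_filter, Finset.mem_univ, true_and, not_and] at this
  have h2 := this hab
  rcases lt_trichotomy (w a) (w b) with h3 | h3 | h3
  · exact h3
  · exact absurd (w.injective h3) hab.ne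
  · exact absurd h3 h2

lemma exists_desc (w : Equiv.Perm (Fin n)) (hw : w ≠ 1) :
    ∃ v, ∃ hv : v + 1 < n, (w⁻¹ ⟨v + 1, hv⟩ : Fin n) < w⁻¹ ⟨v, by omega⟩ := by
  by_contra hno
  push_neg at hno
  apply hw
  rw [← inv_eq_one]
  apply eq_one_of_strictMono
  have step : ∀ v (hv : v + 1 < n), (w⁻¹ ⟨v, by omega⟩ : Fin n) < w⁻¹ ⟨v + 1, hv⟩ := by
    intro v hv
    rcases lt_trichotomy ((w⁻¹ ⟨v, by omega⟩ : Fin n)) (w⁻¹ ⟨v + 1, hv⟩) with h | h | h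
    · exact h
    · exact absurd (w⁻¹.injective h) (by simp [Fin.ext_iff])
    · exact absurd h (not_lt.mpr (hno v hv))
  have chain : ∀ d v, ∀ _ : v + d + 1 ≤ n, (w⁻¹ ⟨v, by omega⟩ : Fin n) ≤ w⁻¹ ⟨v + d, by omega⟩ := by
    intro d
    induction d with
    | zero => intro v h; exact le_of_eq rfl
    | succ d ih =>
      intro v h
      refine le_of_lt (lt_of_le_of_lt (ih v (by omega)) ?_)
      exact step (v + d) (by omega)
  intro a b hab
  have hval : a.val < b.val := hab
  have step2 := step (a.val + (b.val - a.val - 1)) (by omega)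
  have h3 : w⁻¹ a = w⁻¹ ⟨a.val, a.2⟩ := rfl
  have h4 : (⟨a.val + (b.val - a.val - 1) + 1, by omega⟩ : Fin n) = b :=
    Fin.ext (by show a.val + (b.val - a.val - 1) + 1 = b.val; omega)
  calc w⁻¹ a = w⁻¹ ⟨a.val, a.2⟩ := rfl
    _ ≤ w⁻¹ ⟨a.val + (b.val - a.val - 1), by omega⟩ := chain _ _ (by omega)
    _ < w⁻¹ ⟨a.val + (b.val - a.val - 1) + 1, by omega⟩ := step2
    _ = w⁻¹ b := by rw [h4]

lemma exists_word (w : Equiv.Perm (Fin n)) :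
    ∃ word : List ℕ, (word.map (simpleT n)).prod = w ∧ word.length = inv w := by
  suffices H : ∀ N (w : Equiv.Perm (Fin n)), inv w = N →
      ∃ word : List ℕ, (word.map (simpleT n)).prod = w ∧ word.length = inv w by
    exact H (inv w) w rfl
  intro N
  induction N using Nat.strong_induction_on with
  | _ N ih =>
    intro w hN
    by_cases hw : w = 1
    · refine ⟨[], by simp [hw], ?_⟩
      rw [hw, inv_one]
      rfl
    · obtain ⟨v, hv, hd⟩ := exists_desc w hw
      have hlen : inv (Equiv.swap (⟨v, by omega⟩ : Fin n) ⟨v + 1, hv⟩ * w) + 1 = inv w :=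
        inv_swap_desc hv w hd
      obtain ⟨word, hprod, hwl⟩ := ih (inv (Equiv.swap (⟨v, by omega⟩ : Fin n) ⟨v + 1, hv⟩ * w))
        (by omega) _ rfl
      refine ⟨(v + 1) :: word, ?_, ?_⟩
      · rw [List.map_cons, List.prod_cons, hprod, simpleT_eq_swap hv,
          ← mul_assoc, Equiv.swap_mul_self, one_mul]
      · rw [List.length_cons, hwl]
        omega

lemma permLen_eq_inv (w : Equiv.Perm (Fin n)) : permLen n w = inv w := by
  obtain ⟨word, hprod, hlen⟩ := exists_word w
  apply le_antisymm
  · exact Nat.sInf_le ⟨word, hlen, hprod⟩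
  · have hne : {l : ℕ | ∃ word : List ℕ, word.length = l ∧
        (word.map (simpleT n)).prod = w}.Nonempty := ⟨inv w, word, hlen, hprod⟩
    apply le_csInf hne
    rintro b ⟨word', hl, hp⟩
    calc inv w = inv ((word'.map (simpleT n)).prod) := by rw [hp]
      _ ≤ word'.length := inv_le_length word'
      _ = b := hl

lemma pigeon (σ : Equiv.Perm (Fin n)) (i : ℕ)
    (h : ∀ a : Fin n, a.val < i → (σ a).val < i) :
    ∀ b : Fin n, (σ b).val < i → b.val < i := by
  intro b hb
  by_contra hbi
  have hsub : (Finset.univ.filter fun a : Fin n => a.val < i).image σ ⊆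
      Finset.univ.filter fun a : Fin n => a.val < i := by
    intro y hy
    simp only [Finset.mem_image, Finset.mem_filter, Finset.mem_univ, true_and] at hy ⊢
    obtain ⟨a, ha, rfl⟩ := hy
    exact h a ha
  have hcard : ((Finset.univ.filter fun a : Fin n => a.val < i).image σ).card
      = (Finset.univ.filter fun a : Fin n => a.val < i).card :=
    Finset.card_image_of_injective _ σ.injective
  have heq := Finset.eq_of_subset_of_card_le hsub (le_of_eq hcard.symm)
  have hmem : σ b ∈ (Finset.univ.filter fun a : Fin n => a.val < i) := by
    simp only [Finset.mem_filter, Finset.mem_univ, true_and]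
    exact hb
  rw [← heq] at hmem
  simp only [Finset.mem_image, Finset.mem_filter, Finset.mem_univ, true_and] at hmem
  obtain ⟨a, ha, hab⟩ := hmem
  have := σ.injective hab
  subst this
  exact hbi ha

lemma prod_preserves (word : List ℕ) (i : ℕ) (hi : i ∉ word) :
    ∀ a : Fin n, a.val < i → (((word.map (simpleT n)).prod) a).val < i := by
  induction word with
  | nil => intro a ha; simpa using ha
  | cons j rest ih =>
    intro a ha
    rw [List.map_cons, List.prod_cons, Equiv.Perm.mul_apply]
    have hrest := ih (fun hc => hi (List.mem_cons_of_mem _ hc)) a ha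
    have hj : j ≠ i := fun hc => hi (hc ▸ List.mem_cons_self)
    by_cases hval : 1 ≤ j ∧ j < n
    · obtain ⟨v, rfl⟩ : ∃ v, j = v + 1 := ⟨j - 1, by omega⟩
      rw [simpleT_eq_swap hval.2, swap_val hval.2]
      split_ifs <;> omega
    · rw [simpleT, dif_neg hval]
      simpa using hrest

lemma mem_of_cset (word : List ℕ) (w : Equiv.Perm (Fin n))
    (hprod : (word.map (simpleT n)).prod = w) {i : ℕ} (hi : i ∈ CsetF w) : i ∈ word := by
  by_contra hc
  rw [CsetF, Finset.mem_filter, Finset.mem_range] at hi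
  obtain ⟨hin, h1, a, ha, hwa⟩ := hi
  have := prod_preserves word i hc a ha
  rw [hprod] at this
  omega

lemma reduced_letters : ∀ (word : List ℕ) (w : Equiv.Perm (Fin n)),
    (word.map (simpleT n)).prod = w → word.length = inv w → ∀ j ∈ word, j ∈ CsetF w := by
  intro word
  induction word with
  | nil => intro w _ _ j hj; exact absurd hj List.not_mem_nil
  | cons j rest ih =>
    intro w hprod hlen j' hj'
    rw [List.map_cons, List.prod_cons] at hprod
    rw [List.length_cons] at hlen
    have hval : 1 ≤ j ∧ j < n := by
      by_contra hc
      have h1 : simpleT n j = 1 := by rw [simpleT, dif_neg hc]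
      rw [h1, one_mul] at hprod
      have h2 := inv_le_length (n := n) rest
      rw [hprod] at h2
      omega
    obtain ⟨v, rfl⟩ : ∃ v, j = v + 1 := ⟨j - 1, by omega⟩
    have hv : v + 1 < n := hval.2
    rw [simpleT_eq_swap hv] at hprod
    have hle1 : inv ((rest.map (simpleT n)).prod) ≤ rest.length := inv_le_length rest
    obtain ⟨u, hu⟩ : ∃ u, (rest.map (simpleT n)).prod = u := ⟨_, rfl⟩
    rw [hu] at hprod hle1
    have hle2 : inv w ≤ inv u + 1 := by
      rw [← hprod]
      have h3 := inv_mul_simpleT_le (n := n) (v + 1) u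
      rw [simpleT_eq_swap hv] at h3
      exact h3
    have hueq : inv u + 1 = inv w := by omega
    have hasc : (u⁻¹ ⟨v, by omega⟩ : Fin n) < u⁻¹ ⟨v + 1, hv⟩ := by
      rcases lt_trichotomy ((u⁻¹ ⟨v, by omega⟩ : Fin n)) (u⁻¹ ⟨v + 1, hv⟩) with h | h | h
      · exact h
      · exact absurd (u⁻¹.injective h) (by simp [Fin.ext_iff])
      · have h4 := inv_swap_desc hv u h
        rw [hprod] at h4
        omega
    have hq1 : w (u⁻¹ ⟨v, by omega⟩) = ⟨v + 1, hv⟩ := by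
      have h5 : u (u⁻¹ ⟨v, by omega⟩) = (⟨v, by omega⟩ : Fin n) := u.apply_symm_apply _
      have h6 : Equiv.swap (⟨v, by omega⟩ : Fin n) ⟨v + 1, hv⟩ (u (u⁻¹ ⟨v, by omega⟩))
          = w (u⁻¹ ⟨v, by omega⟩) := DFunLike.congr_fun hprod _
      rw [h5] at h6
      rw [← h6]
      exact Equiv.swap_apply_left _ _
    have hq2 : w (u⁻¹ ⟨v + 1, hv⟩) = ⟨v, by omega⟩ := by
      have h5 : u (u⁻¹ ⟨v + 1, hv⟩) = (⟨v + 1, hv⟩ : Fin n) := u.apply_symm_apply _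
      have h6 : Equiv.swap (⟨v, by omega⟩ : Fin n) ⟨v + 1, hv⟩ (u (u⁻¹ ⟨v + 1, hv⟩))
          = w (u⁻¹ ⟨v + 1, hv⟩) := DFunLike.congr_fun hprod _
      rw [h5] at h6
      rw [← h6]
      exact Equiv.swap_apply_right _ _
    have hjmem : v + 1 ∈ CsetF w := by
      rw [CsetF, Finset.mem_filter, Finset.mem_range]
      refine ⟨hv, by omega, ?_⟩
      by_contra hno
      push_neg at hno
      have hp := pigeon w (v + 1) hno
      have hq2lt : (u⁻¹ ⟨v + 1, hv⟩ : Fin n).val < v + 1 := by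
        apply hp
        rw [hq2]
        exact Nat.lt_succ_self v
      have hq1ge : ¬ (u⁻¹ ⟨v, by omega⟩ : Fin n).val < v + 1 := by
        intro hc
        have h5 := hno _ hc
        rw [hq1] at h5
        simp at h5
      have h6 : (u⁻¹ ⟨v, by omega⟩ : Fin n).val < (u⁻¹ ⟨v + 1, hv⟩ : Fin n).val := hasc
      omega
    rcases List.mem_cons.mp hj' with rfl | hmem
    · exact hjmem
    · by_cases hne : j' = v + 1
      · exact hne ▸ hjmem
      · have hju : j' ∈ CsetF u := ih u hu (by omega) j' hmem
        rw [CsetF, Finset.mem_filter, Finset.mem_range] at hju ⊢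
        obtain ⟨hin, h1, a, ha, hwa⟩ := hju
        refine ⟨hin, h1, a, ha, ?_⟩
        rw [← hprod, Equiv.Perm.mul_apply, swap_val hv]
        split_ifs <;> omega

lemma permSupp_eq (w : Equiv.Perm (Fin n)) : permSupp n w = ↑(CsetF w) := by
  ext i
  simp only [permSupp, Set.mem_setOf_eq, Finset.mem_coe]
  constructor
  · rintro ⟨word, ⟨hprod, hlen⟩, hi⟩
    exact reduced_letters word w hprod (hlen.trans (permLen_eq_inv w)) i hi
  · intro hi
    obtain ⟨word, hprod, hlen⟩ := exists_word w
    exact ⟨word, ⟨hprod, hlen.trans (permLen_eq_inv w).symm⟩, mem_of_cset word w hprod hi⟩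

lemma csetCard_le_inv (w : Equiv.Perm (Fin n)) : (CsetF w).card ≤ inv w := by
  obtain ⟨word, hprod, hlen⟩ := exists_word w
  calc (CsetF w).card ≤ word.toFinset.card :=
      Finset.card_le_card (fun i hi => List.mem_toFinset.mpr (mem_of_cset word w hprod hi))
    _ ≤ word.length := word.toFinset_card_le
    _ = inv w := hlen

section Delete

variable {m : ℕ}

def topPos (w : Equiv.Perm (Fin (m + 1))) : Fin (m + 1) := w⁻¹ (Fin.last m)

lemma w_topPos (w : Equiv.Perm (Fin (m + 1))) : w (topPos w) = Fin.last m :=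
  w.apply_symm_apply _

lemma val_lt_of_ne_top (w : Equiv.Perm (Fin (m + 1))) (x : Fin (m + 1)) (hx : x ≠ topPos w) :
    (w x).val < m := by
  have h1 : w x ≠ Fin.last m := by
    intro hc
    apply hx
    rw [topPos, ← hc, Equiv.Perm.inv_def, Equiv.symm_apply_apply]
  have h2 : (w x).val ≠ m := fun hc => h1 (Fin.ext hc)
  have h3 := (w x).isLt
  omega

def delF (w : Equiv.Perm (Fin (m + 1))) : Fin m → Fin m := fun k =>
  ⟨(w ((topPos w).succAbove k)).val, val_lt_of_ne_top w _ (Fin.succAbove_ne _ _)⟩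

lemma delF_inj (w : Equiv.Perm (Fin (m + 1))) : Function.Injective (delF w) := by
  intro a b hab
  have h1 : (w ((topPos w).succAbove a)).val = (w ((topPos w).succAbove b)).val := by
    have h0 := congrArg Fin.val hab
    exact h0
  have h2 := w.injective (Fin.ext h1)
  exact Fin.succAbove_right_injective h2

noncomputable def del (w : Equiv.Perm (Fin (m + 1))) : Equiv.Perm (Fin m) :=
  Equiv.ofBijective (delF w) (Finite.injective_iff_bijective.mp (delF_inj w))

lemma del_apply (w : Equiv.Perm (Fin (m + 1))) (k : Fin m) :
    (del w k).val = (w ((topPos w).succAbove k)).val := rfl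

lemma succAbove_val (p : Fin (m + 1)) (k : Fin m) :
    (p.succAbove k).val = if k.val < p.val then k.val else k.val + 1 := by
  by_cases h : k.val < p.val
  · rw [Fin.succAbove_of_castSucc_lt p k (by rwa [Fin.lt_def, Fin.coe_castSucc]), if_pos h,
      Fin.coe_castSucc]
  · rw [Fin.succAbove_of_le_castSucc p k (by rw [Fin.le_def, Fin.coe_castSucc]; omega), if_neg h,
      Fin.val_succ]

lemma succAbove_mk_eq (p : Fin (m + 1)) (a : Fin (m + 1)) (hm : a.val < m)
    (h : a.val < p.val) : p.succAbove ⟨a.val, hm⟩ = a := by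
  apply Fin.ext
  have hvmk : ((⟨a.val, hm⟩ : Fin m)).val = a.val := rfl
  rw [succAbove_val, hvmk, if_pos h]

lemma succAbove_mk_eq' (p : Fin (m + 1)) (x : Fin (m + 1)) (hm : x.val - 1 < m)
    (h : p.val < x.val) : p.succAbove ⟨x.val - 1, hm⟩ = x := by
  apply Fin.ext
  have hvmk : ((⟨x.val - 1, hm⟩ : Fin m)).val = x.val - 1 := rfl
  rw [succAbove_val, hvmk, if_neg (by omega)]
  show x.val - 1 + 1 = x.val
  omega

lemma inv_del (w : Equiv.Perm (Fin (m + 1))) :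
    inv w = inv (del w) + (m - (topPos w).val) := by
  classical
  have hinj2 : Function.Injective
      (fun x : Fin m × Fin m => ((topPos w).succAbove x.1, (topPos w).succAbove x.2)) := by
    intro x y hxy
    rw [Prod.mk.injEq] at hxy
    exact Prod.ext (Fin.succAbove_right_injective hxy.1) (Fin.succAbove_right_injective hxy.2)
  have key : invF w =
      ((Finset.Ioi (topPos w)).image fun b => (topPos w, b))
      ∪ (invF (del w)).image
          (fun x : Fin m × Fin m => ((topPos w).succAbove x.1, (topPos w).succAbove x.2)) := by
    ext x
    obtain ⟨a, b⟩ := x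
    simp only [invF, Finset.mem_filter, Finset.mem_univ, true_and, Finset.mem_union,
      Finset.mem_image, Finset.mem_Ioi, Prod.mk.injEq, Prod.exists]
    constructor
    · rintro ⟨hab, hv⟩
      by_cases ha : a = topPos w
      · exact Or.inl ⟨b, ha ▸ hab, ha.symm, rfl⟩
      · right
        have hb : b ≠ topPos w := by
          intro hc
          rw [hc, w_topPos] at hv
          have := (w a).isLt
          exact absurd hv (by rw [Fin.lt_def]; simp [Fin.last]; omega)
        obtain ⟨a', ha'⟩ := Fin.exists_succAbove_eq ha
        obtain ⟨b', hb'⟩ := Fin.exists_succAbove_eq hb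
        refine ⟨a', b', ⟨?_, ?_⟩, ha', hb'⟩
        · have := (Fin.strictMono_succAbove (topPos w)).lt_iff_lt (a := a') (b := b')
          rw [ha', hb'] at this
          exact this.mp hab
        · rw [Fin.lt_def, del_apply, del_apply, ha', hb']
          exact hv
    · rintro (⟨b', hb', hpa, hbb⟩ | ⟨a', b', ⟨hab', hv'⟩, ha', hb'⟩)
      · subst hbb
        refine ⟨hpa ▸ hb', ?_⟩
        rw [← hpa, w_topPos]
        have h1 : w b' ≠ Fin.last m := by
          intro hc
          have h9 : b' = topPos w := by rw [topPos, ← hc, Equiv.Perm.inv_def, Equiv.symm_apply_apply]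
          rw [h9] at hb'
          exact absurd hb' (lt_irrefl _)
        rw [Fin.lt_def]
        have h2 : (w b').val ≠ m := fun hc => h1 (Fin.ext hc)
        have h3 := (w b').isLt
        simp only [Fin.val_last]
        omega
      · subst ha'
        subst hb'
        constructor
        · exact (Fin.strictMono_succAbove (topPos w)) hab'
        · rw [Fin.lt_def] at hv' ⊢
          rw [del_apply, del_apply] at hv'
          exact hv'
  have hdisj : Disjoint ((Finset.Ioi (topPos w)).image fun b => (topPos w, b))
      ((invF (del w)).image
        (fun x : Fin m × Fin m => ((topPos w).succAbove x.1, (topPos w).succAbove x.2))) := by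
    rw [Finset.disjoint_left]
    rintro ⟨a, b⟩ h1 h2
    simp only [Finset.mem_image, Prod.mk.injEq, Finset.mem_Ioi, Prod.exists] at h1 h2
    obtain ⟨b', _, hpa, _⟩ := h1
    obtain ⟨a', b'', _, ha', _⟩ := h2
    exact Fin.succAbove_ne (topPos w) a' (by rw [ha', ← hpa])
  have hinj1 : Function.Injective (fun b : Fin (m + 1) => (topPos w, b)) :=
    fun x y hxy => ((Prod.mk.injEq _ _ _ _).mp hxy).2
  rw [inv, inv, key, Finset.card_union_of_disjoint hdisj,
    Finset.card_image_of_injective _ hinj2,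
    Finset.card_image_of_injective _ hinj1, Fin.card_Ioi]
  omega

lemma cset_le_p (w : Equiv.Perm (Fin (m + 1))) (i : ℕ) (hip : i ≤ (topPos w).val) :
    i ∈ CsetF w ↔ i ∈ CsetF (del w) := by
  constructor
  · intro hi
    rw [CsetF, Finset.mem_filter, Finset.mem_range] at hi ⊢
    obtain ⟨hin, h1, a, ha, hwa⟩ := hi
    have him : i < m := by
      by_contra hcm
      have h4 : (w a).val = m := by
        have h9 := (w a).isLt
        omega
      have h5 : w a = Fin.last m := Fin.ext h4
      have h6 : a = topPos w := by rw [topPos, ← h5, Equiv.Perm.inv_def, Equiv.symm_apply_apply]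
      have h7 : a.val = (topPos w).val := congrArg Fin.val h6
      omega
    refine ⟨him, h1, ⟨a.val, by omega⟩, ha, ?_⟩
    rw [del_apply, succAbove_mk_eq (topPos w) a (by omega) (by omega)]
    exact hwa
  · intro hi
    rw [CsetF, Finset.mem_filter, Finset.mem_range] at hi ⊢
    obtain ⟨him, h1, a', ha', hwa'⟩ := hi
    refine ⟨by omega, h1, (topPos w).succAbove a', ?_, ?_⟩
    · rw [succAbove_val]
      split_ifs <;> omega
    · rw [del_apply] at hwa'
      exact hwa'

lemma cset_gt_p (w : Equiv.Perm (Fin (m + 1))) (i : ℕ) (hpi : (topPos w).val < i)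
    (him : i ≤ m) : i ∈ CsetF w := by
  rw [CsetF, Finset.mem_filter, Finset.mem_range]
  refine ⟨by omega, by omega, topPos w, hpi, ?_⟩
  rw [w_topPos]
  exact him

lemma cset_card (w : Equiv.Perm (Fin (m + 1))) :
    (CsetF w).card = ((CsetF (del w)).filter (· ≤ (topPos w).val)).card
      + (m - (topPos w).val) := by
  have hset : CsetF w = ((CsetF (del w)).filter (· ≤ (topPos w).val))
      ∪ Finset.Ioc (topPos w).val m := by
    ext i
    simp only [Finset.mem_union, Finset.mem_filter, Finset.mem_Ioc]
    constructor
    · intro hi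
      have hr : i < m + 1 ∧ 1 ≤ i := by
        rw [CsetF, Finset.mem_filter, Finset.mem_range] at hi
        exact ⟨hi.1, hi.2.1⟩
      by_cases hle : i ≤ (topPos w).val
      · exact Or.inl ⟨(cset_le_p w i hle).mp hi, hle⟩
      · exact Or.inr ⟨by omega, by omega⟩
    · rintro (⟨hi, hle⟩ | ⟨h1, h2⟩)
      · exact (cset_le_p w i hle).mpr hi
      · exact cset_gt_p w i h1 h2
  have hd : Disjoint ((CsetF (del w)).filter (· ≤ (topPos w).val))
      (Finset.Ioc (topPos w).val m) := by
    rw [Finset.disjoint_left]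
    intro i hi hic
    rw [Finset.mem_filter] at hi
    rw [Finset.mem_Ioc] at hic
    omega
  rw [hset, Finset.card_union_of_disjoint hd, Nat.card_Ioc]

def Cond (w : Equiv.Perm (Fin (m + 1))) : Prop :=
  (∀ c d : Fin (m + 1), topPos w < c → c < d → w c < w d) ∧
  (∀ a c d : Fin (m + 1), a < topPos w → topPos w < c → c < d → ¬(w c < w d ∧ w d < w a))

lemma card_small (i : ℕ) (σ : Equiv.Perm (Fin (m + 1))) (hi : i ≤ m + 1) :
    (Finset.univ.filter fun x : Fin (m + 1) => (σ x).val < i).card = i := by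
  classical
  have himg : (Finset.univ.filter fun x : Fin (m + 1) => (σ x).val < i)
      = (Finset.univ.filter fun y : Fin (m + 1) => y.val < i).image σ.symm := by
    ext x
    simp only [Finset.mem_filter, Finset.mem_univ, true_and, Finset.mem_image]
    constructor
    · intro hx
      exact ⟨σ x, hx, σ.symm_apply_apply x⟩
    · rintro ⟨y, hy, rfl⟩
      rwa [σ.apply_symm_apply]
  rw [himg, Finset.card_image_of_injective _ σ.symm.injective]
  by_cases him : i < m + 1
  · have : (Finset.univ.filter fun y : Fin (m + 1) => y.val < i) = Finset.Iio ⟨i, him⟩ := by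
      ext y
      simp [Finset.mem_Iio, Fin.lt_def]
    rw [this, Fin.card_Iio]
  · have hieq : i = m + 1 := by omega
    have : (Finset.univ.filter fun y : Fin (m + 1) => y.val < i) = Finset.univ := by
      ext y
      simp only [Finset.mem_filter, Finset.mem_univ, true_and, iff_true]
      have := y.isLt
      omega
    rw [this]
    simp [hieq]

lemma cond_no_cross (w : Equiv.Perm (Fin (m + 1))) (hc : Cond w) :
    ∀ i ∈ CsetF (del w), i ≤ (topPos w).val := by
  intro i hi
  by_contra hgt
  push_neg at hgt
  rw [CsetF, Finset.mem_filter, Finset.mem_range] at hi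
  obtain ⟨him, h1, a', ha', hwa'⟩ := hi
  have hwa : i ≤ (w ((topPos w).succAbove a')).val := by
    rw [del_apply] at hwa'
    exact hwa'
  obtain ⟨a, haeq⟩ : ∃ a, (topPos w).succAbove a' = a := ⟨_, rfl⟩
  rw [haeq] at hwa
  have hav : a.val ≤ i := by
    rw [← haeq, succAbove_val]
    split_ifs <;> omega
  have hanep : a ≠ topPos w := haeq ▸ Fin.succAbove_ne _ _
  obtain ⟨V, hVdef⟩ : ∃ V, Finset.univ.filter (fun x : Fin (m + 1) => (w x).val < i) = V :=
    ⟨_, rfl⟩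
  have hV : V.card = i := by rw [← hVdef]; exact card_small i w (by omega)
  have hpV : topPos w ∉ V := by
    rw [← hVdef, Finset.mem_filter]
    rintro ⟨-, hcon⟩
    rw [w_topPos] at hcon
    simp only [Fin.val_last] at hcon
    omega
  have haV : a ∉ V := by
    rw [← hVdef, Finset.mem_filter]
    rintro ⟨-, hcon⟩
    omega
  have final : ∀ c d : Fin (m + 1), c ∈ V → d ∈ V → (topPos w).val < c.val →
      (topPos w).val < d.val → c < d → a < topPos w → False := by
    intro c d hcV hdV hpc hpd hcd hap
    have hwc : (w c).val < i := by
      rw [← hVdef, Finset.mem_filter] at hcV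
      exact hcV.2
    have hwd : (w d).val < i := by
      rw [← hVdef, Finset.mem_filter] at hdV
      exact hdV.2
    have hw1 : w c < w d := hc.1 c d (Fin.lt_def.mpr hpc) hcd
    exact hc.2 a c d hap (Fin.lt_def.mpr hpc) hcd ⟨hw1, Fin.lt_def.mpr (by omega)⟩
  rcases lt_or_gt_of_ne (fun hcon : a = topPos w => hanep hcon) with hap | hpa
  · -- a < p : at least two elements of V after p
    have hc1 : (V.filter (fun x => x.val < (topPos w).val)).card ≤ (topPos w).val - 1 := by
      have hsub2 : V.filter (fun x => x.val < (topPos w).val) ⊆ (Finset.Iio (topPos w)).erase a := by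
        intro x hx
        rw [Finset.mem_filter] at hx
        rw [Finset.mem_erase, Finset.mem_Iio]
        refine ⟨?_, Fin.lt_def.mpr hx.2⟩
        intro hceq
        rw [hceq] at hx
        exact haV hx.1
      calc (V.filter (fun x => x.val < (topPos w).val)).card
          ≤ ((Finset.Iio (topPos w)).erase a).card := Finset.card_le_card hsub2
        _ = (Finset.Iio (topPos w)).card - 1 :=
            Finset.card_erase_of_mem (by rw [Finset.mem_Iio]; exact hap)
        _ = (topPos w).val - 1 := by rw [Fin.card_Iio]
    have hcu : V.card ≤ (V.filter (fun x => x.val < (topPos w).val)).card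
        + (V.filter (fun x => (topPos w).val < x.val)).card := by
      have hsplit : V ⊆ (V.filter (fun x => x.val < (topPos w).val))
          ∪ (V.filter (fun x => (topPos w).val < x.val)) := by
        intro x hx
        rw [Finset.mem_union, Finset.mem_filter, Finset.mem_filter]
        rcases lt_trichotomy x.val (topPos w).val with h | h | h
        · exact Or.inl ⟨hx, h⟩
        · exfalso
          have : x = topPos w := Fin.ext h
          rw [this] at hx
          exact hpV hx
        · exact Or.inr ⟨hx, h⟩
      calc V.card ≤ _ := Finset.card_le_card hsplit
        _ ≤ _ := Finset.card_union_le _ _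
    have hS : 1 < (V.filter (fun x => (topPos w).val < x.val)).card := by
      have hpvi : (topPos w).val < i := hgt
      omega
    obtain ⟨c, hcS, d, hdS, hcd⟩ := Finset.one_lt_card.mp hS
    rw [Finset.mem_filter] at hcS hdS
    rcases lt_or_gt_of_ne hcd with h | h
    · exact final c d hcS.1 hdS.1 hcS.2 hdS.2 h hap
    · exact final d c hdS.1 hcS.1 hdS.2 hcS.2 h hap
  · -- p < a : some element of V beyond i
    have hBne : (V.filter fun x => i < x.val).Nonempty := by
      by_contra hB
      rw [Finset.not_nonempty_iff_eq_empty] at hB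
      obtain ⟨ifin, hifin⟩ : ∃ t : Fin (m + 1), t.val = i := ⟨⟨i, by omega⟩, rfl⟩
      have hsub3 : V ⊆ ((Finset.Iic ifin).erase (topPos w)).erase a := by
        intro x hx
        have hxle : x.val ≤ i := by
          by_contra hxc
          have hmm : x ∈ V.filter fun x => i < x.val :=
            Finset.mem_filter.mpr ⟨hx, by omega⟩
          rw [hB] at hmm
          exact absurd hmm (Finset.notMem_empty _)
        rw [Finset.mem_erase, Finset.mem_erase, Finset.mem_Iic]
        refine ⟨?_, ?_, ?_⟩
        · intro hceq
          rw [hceq] at hx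
          exact haV hx
        · intro hceq
          rw [hceq] at hx
          exact hpV hx
        · rw [Fin.le_def, hifin]
          exact hxle
      have hcard3 := Finset.card_le_card hsub3
      rw [Finset.card_erase_of_mem, Finset.card_erase_of_mem, Fin.card_Iic] at hcard3
      · omega
      · rw [Finset.mem_Iic, Fin.le_def, hifin]
        omega
      · rw [Finset.mem_erase, Finset.mem_Iic]
        exact ⟨hanep, by rw [Fin.le_def, hifin]; exact hav⟩
    obtain ⟨b, hb⟩ := hBne
    rw [Finset.mem_filter] at hb
    obtain ⟨hbV, hbi⟩ := hb
    have hwb : (w b).val < i := by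
      rw [← hVdef, Finset.mem_filter] at hbV
      exact hbV.2
    have hwab := hc.1 a b hpa (Fin.lt_def.mpr (by omega))
    rw [Fin.lt_def] at hwab
    omega

lemma no_cross_cond (w : Equiv.Perm (Fin (m + 1)))
    (h : ∀ i ∈ CsetF (del w), i ≤ (topPos w).val) : Cond w := by
  have hpres : ∀ i, (topPos w).val < i → i < m → ∀ a' : Fin m, a'.val < i →
      (del w a').val < i := by
    intro i hpi him a' ha'
    by_contra hcon
    have hmem : i ∈ CsetF (del w) := by
      rw [CsetF, Finset.mem_filter, Finset.mem_range]
      exact ⟨by omega, by omega, a', ha', by omega⟩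
    have := h i hmem
    omega
  have hfix : ∀ k : Fin m, (topPos w).val < k.val → (del w k).val = k.val := by
    intro k hk
    have hup : (del w k).val ≤ k.val := by
      by_cases hkm : k.val + 1 < m
      · have := hpres (k.val + 1) (by omega) hkm k (by omega)
        omega
      · have := (del w k).isLt
        have := k.isLt
        omega
    have hlow : k.val ≤ (del w k).val := by
      by_contra hcon
      have := pigeon (del w) k.val (hpres k.val hk k.isLt) k (by omega)
      omega
    omega
  have hsmallest : ∀ a' : Fin m, a'.val ≤ (topPos w).val → (del w a').val ≤ (topPos w).val := by
    intro a' ha'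
    by_cases hpm : (topPos w).val + 1 < m
    · have := hpres ((topPos w).val + 1) (by omega) hpm a' (by omega)
      omega
    · have := (del w a').isLt
      omega
  have hxval : ∀ x : Fin (m + 1), ∀ hx : (topPos w).val < x.val,
      (w x).val = (del w ⟨x.val - 1, by have h9 := x.isLt; omega⟩).val := by
    intro x hx
    rw [del_apply, succAbove_mk_eq' (topPos w) x (by omega) hx]
  constructor
  · intro c d hpc hcd
    have hpcv : (topPos w).val < c.val := hpc
    have hcdv : c.val < d.val := hcd
    have hdval : (w d).val = d.val - 1 := by
      rw [hxval d (by omega)]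
      exact hfix _ (by show (topPos w).val < d.val - 1; omega)
    rw [Fin.lt_def]
    by_cases hc1 : c.val = (topPos w).val + 1
    · have : (w c).val ≤ (topPos w).val := by
        rw [hxval c (by omega)]
        exact hsmallest _ (by show c.val - 1 ≤ (topPos w).val; omega)
      omega
    · have : (w c).val = c.val - 1 := by
        rw [hxval c (by omega)]
        exact hfix _ (by show (topPos w).val < c.val - 1; omega)
      omega
  · rintro a c d hap hpc hcd ⟨h1, h2⟩
    have hpcv : (topPos w).val < c.val := hpc
    have hcdv : c.val < d.val := hcd
    have hapv : a.val < (topPos w).val := hap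
    have hdval : (w d).val = d.val - 1 := by
      rw [hxval d (by omega)]
      exact hfix _ (by show (topPos w).val < d.val - 1; omega)
    have haval : (w a).val ≤ (topPos w).val := by
      have hsm := hsmallest ⟨a.val, by omega⟩ (by show a.val ≤ (topPos w).val; omega)
      rw [del_apply, succAbove_mk_eq (topPos w) a (by omega) hapv] at hsm
      exact hsm
    have hdv2 := Fin.lt_def.mp h2
    omega

end Delete

lemma iff_of_imp {N k : ℕ} (w : Equiv.Perm (Fin N)) (q : Equiv.Perm (Fin k))
    (j : Fin k → Fin N) (H : ∀ a b, q a < q b → w (j a) < w (j b)) :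
    ∀ a b, w (j a) < w (j b) ↔ q a < q b := by
  intro a b
  constructor
  · intro hw
    rcases lt_trichotomy (q a) (q b) with h | h | h
    · exact h
    · exfalso
      have hab : a = b := q.injective h
      rw [hab] at hw
      exact lt_irrefl _ hw
    · exact absurd hw (lt_asymm (H b a h))
  · exact H a b

lemma mono3 {N : ℕ} {a b c : Fin N} (hab : a < b) (hbc : b < c) :
    StrictMono ![a, b, c] := by
  intro x y hxy
  fin_cases x <;> fin_cases y <;>
    first
      | exact absurd hxy (by decide)
      | exact hab
      | exact hbc
      | exact hab.trans hbc

lemma mono4 {N : ℕ} {a b c d : Fin N} (hab : a < b) (hbc : b < c) (hcd : c < d) :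
    StrictMono ![a, b, c, d] := by
  intro x y hxy
  fin_cases x <;> fin_cases y <;>
    first
      | exact absurd hxy (by decide)
      | exact hab
      | exact hbc
      | exact hcd
      | exact hab.trans hbc
      | exact hbc.trans hcd
      | exact (hab.trans hbc).trans hcd

lemma contains321_of {N : ℕ} (w : Equiv.Perm (Fin N)) (a b c : Fin N)
    (hab : a < b) (hbc : b < c) (h1 : w b < w a) (h2 : w c < w b) :
    ContainsPattern w pattern321 := by
  refine ⟨![a, b, c], mono3 hab hbc, iff_of_imp w pattern321 _ ?_⟩
  intro x y
  fin_cases x <;> fin_cases y <;> intro h <;>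
    first
      | exact absurd h (by decide)
      | exact h1
      | exact h2
      | exact h2.trans h1

lemma contains3412_of {N : ℕ} (w : Equiv.Perm (Fin N)) (a b c d : Fin N)
    (hab : a < b) (hbc : b < c) (hcd : c < d)
    (h1 : w c < w d) (h2 : w d < w a) (h3 : w a < w b) :
    ContainsPattern w pattern3412 := by
  refine ⟨![a, b, c, d], mono4 hab hbc hcd, iff_of_imp w pattern3412 _ ?_⟩
  intro x y
  fin_cases x <;> fin_cases y <;> intro h <;>
    first
      | exact absurd h (by decide)
      | exact h1
      | exact h2
      | exact h3
      | exact h1.trans h2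
      | exact h2.trans h3
      | exact (h1.trans h2).trans h3

section Transfer

variable {m : ℕ}

lemma wlt_top (w : Equiv.Perm (Fin (m + 1))) (x : Fin (m + 1)) (hx : x ≠ topPos w) :
    w x < w (topPos w) := by
  rw [w_topPos, Fin.lt_def, Fin.val_last]
  exact val_lt_of_ne_top w x hx

lemma contains_of_del {k : ℕ} (w : Equiv.Perm (Fin (m + 1))) (q : Equiv.Perm (Fin k))
    (h : ContainsPattern (del w) q) : ContainsPattern w q := by
  obtain ⟨j, hmono, hiff⟩ := h
  refine ⟨fun a => (topPos w).succAbove (j a),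
    fun a b hab => Fin.strictMono_succAbove _ (hmono hab), ?_⟩
  intro a b
  rw [← hiff a b]
  simp only [Fin.lt_def, del_apply]

lemma contains_del_of_miss {k : ℕ} (w : Equiv.Perm (Fin (m + 1))) (q : Equiv.Perm (Fin k))
    (j : Fin k → Fin (m + 1)) (hocc : IsPatternOcc w q j)
    (hmiss : ∀ a, j a ≠ topPos w) : ContainsPattern (del w) q := by
  choose j' hj' using fun a => Fin.exists_succAbove_eq (hmiss a)
  refine ⟨j', ?_, ?_⟩
  · intro a b hab
    have h1 := hocc.1 hab
    rw [← hj' a, ← hj' b] at h1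
    exact (Fin.strictMono_succAbove _).lt_iff_lt.mp h1
  · intro a b
    rw [← hocc.2 a b]
    simp only [Fin.lt_def, del_apply, hj']

lemma avoid_iff (w : Equiv.Perm (Fin (m + 1))) :
    (AvoidsPattern w pattern321 ∧ AvoidsPattern w pattern3412)
      ↔ (AvoidsPattern (del w) pattern321 ∧ AvoidsPattern (del w) pattern3412) ∧ Cond w := by
  constructor
  · rintro ⟨h321, h3412⟩
    refine ⟨⟨fun hc => h321 (contains_of_del w _ hc), fun hc => h3412 (contains_of_del w _ hc)⟩,
      ?_, ?_⟩
    · intro c d hpc hcd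
      by_contra hcon
      have hne : w c ≠ w d := fun hcc => hcd.ne (w.injective hcc)
      have hwd : w d < w c := by
        rcases lt_trichotomy (w c) (w d) with h | h | h
        · exact absurd h hcon
        · exact absurd h hne
        · exact h
      exact h321 (contains321_of w (topPos w) c d hpc hcd
        (wlt_top w c hpc.ne') hwd)
    · rintro a c d hap hpc hcd ⟨h1, h2⟩
      exact h3412 (contains3412_of w a (topPos w) c d hap hpc hcd h1 h2
        (wlt_top w a hap.ne))
  · rintro ⟨⟨h321, h3412⟩, hcond⟩
    constructor
    · rintro ⟨j, hocc⟩
      by_cases hmiss : ∀ a, j a ≠ topPos w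
      · exact h321 (contains_del_of_miss w _ j hocc hmiss)
      · push_neg at hmiss
        obtain ⟨a0, ha0⟩ := hmiss
        have hub : ∀ b : Fin 3, b ≠ a0 → w (j b) < w (j a0) := by
          intro b hb
          rw [ha0]
          exact wlt_top w (j b) fun hcc => hb (hocc.1.injective (hcc.trans ha0.symm))
        have hqb : ∀ b : Fin 3, b ≠ a0 → pattern321 b < pattern321 a0 :=
          fun b hb => (hocc.2 b a0).mp (hub b hb)
        fin_cases a0
        · have hp1 : topPos w < j 1 := by
            rw [← ha0]
            exact hocc.1 (by decide)
          have h12 : j 1 < j 2 := hocc.1 (by decide)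
          have hv : w (j 2) < w (j 1) := (hocc.2 2 1).mpr (by decide)
          exact absurd (hcond.1 (j 1) (j 2) hp1 h12) (lt_asymm hv)
        · exact absurd (hqb 0 (by decide)) (by decide)
        · exact absurd (hqb 0 (by decide)) (by decide)
    · rintro ⟨j, hocc⟩
      by_cases hmiss : ∀ a, j a ≠ topPos w
      · exact h3412 (contains_del_of_miss w _ j hocc hmiss)
      · push_neg at hmiss
        obtain ⟨a0, ha0⟩ := hmiss
        have hub : ∀ b : Fin 4, b ≠ a0 → w (j b) < w (j a0) := by
          intro b hb
          rw [ha0]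
          exact wlt_top w (j b) fun hcc => hb (hocc.1.injective (hcc.trans ha0.symm))
        have hqb : ∀ b : Fin 4, b ≠ a0 → pattern3412 b < pattern3412 a0 :=
          fun b hb => (hocc.2 b a0).mp (hub b hb)
        fin_cases a0
        · exact absurd (hqb 1 (by decide)) (by decide)
        · have hp0 : j 0 < topPos w := by
            rw [← ha0]
            exact hocc.1 (by decide)
          have hp2 : topPos w < j 2 := by
            rw [← ha0]
            exact hocc.1 (by decide)
          have h23 : j 2 < j 3 := hocc.1 (by decide)
          have hv1 : w (j 2) < w (j 3) := (hocc.2 2 3).mpr (by decide)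
          have hv2 : w (j 3) < w (j 0) := (hocc.2 3 0).mpr (by decide)
          exact hcond.2 (j 0) (j 2) (j 3) hp0 hp2 h23 ⟨hv1, hv2⟩
        · exact absurd (hqb 1 (by decide)) (by decide)
        · exact absurd (hqb 1 (by decide)) (by decide)

end Transfer

lemma core : ∀ (N : ℕ) (w : Equiv.Perm (Fin N)),
    inv w = (CsetF w).card ↔ AvoidsPattern w pattern321 ∧ AvoidsPattern w pattern3412 := by
  intro N
  induction N with
  | zero =>
    intro w
    have hw : inv w = 0 := by
      rw [inv, Finset.card_eq_zero]
      apply Finset.eq_empty_of_forall_notMem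
      intro x
      exact x.1.elim0
    have hC : CsetF w = ∅ := by
      apply Finset.eq_empty_of_forall_notMem
      intro i hi
      rw [CsetF, Finset.mem_filter, Finset.mem_range] at hi
      omega
    have hA : AvoidsPattern w pattern321 := by
      rintro ⟨j, -⟩
      exact (j 0).elim0
    have hB : AvoidsPattern w pattern3412 := by
      rintro ⟨j, -⟩
      exact (j 0).elim0
    rw [hw, hC]
    simpa using ⟨hA, hB⟩
  | succ m ih =>
    intro w
    have hai := inv_del w
    have hac := cset_card w
    have hle := csetCard_le_inv (del w)
    constructor
    · intro heq
      have h2 : inv (del w) = ((CsetF (del w)).filter (· ≤ (topPos w).val)).card := by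
        rw [hai, hac] at heq
        omega
      have hffull : ∀ i ∈ CsetF (del w), i ≤ (topPos w).val := by
        intro i hi
        by_contra hcon
        have hsub : (CsetF (del w)).filter (· ≤ (topPos w).val) ⊆ (CsetF (del w)).erase i := by
          intro x hx
          rw [Finset.mem_filter] at hx
          rw [Finset.mem_erase]
          exact ⟨fun hxi => hcon (hxi ▸ hx.2), hx.1⟩
        have hc1 := Finset.card_le_card hsub
        rw [Finset.card_erase_of_mem hi] at hc1
        have hpos : 0 < (CsetF (del w)).card := Finset.card_pos.mpr ⟨i, hi⟩
        omega
      have hcond : Cond w := no_cross_cond w hffull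
      have hfeq : (CsetF (del w)).filter (· ≤ (topPos w).val) = CsetF (del w) :=
        Finset.filter_true_of_mem hffull
      rw [hfeq] at h2
      exact (avoid_iff w).mpr ⟨(ih (del w)).mp h2, hcond⟩
    · intro havoid
      obtain ⟨hdel_avoid, hcond⟩ := (avoid_iff w).mp havoid
      have h2 : inv (del w) = (CsetF (del w)).card := (ih (del w)).mpr hdel_avoid
      have hfeq : (CsetF (del w)).filter (· ≤ (topPos w).val) = CsetF (del w) :=
        Finset.filter_true_of_mem (cond_no_cross w hcond)
      rw [hai, hac, hfeq, h2]

end Stmt2Aux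

/-- `ℓ(w) = |supp(w)|` iff `w` avoids both 321 and 3412. -/
theorem stmt2 (n : ℕ) (w : Equiv.Perm (Fin n)) :
    permLen n w = (permSupp n w).ncard ↔
      AvoidsPattern w pattern321 ∧ AvoidsPattern w pattern3412 := by
  rw [Stmt2Aux.permLen_eq_inv, Stmt2Aux.permSupp_eq, Set.ncard_coe_finset]
  exact Stmt2Aux.core n w
end

section
/- For a permutation w in the symmetric group S_n, the equality ℓ(w) = |supp(w)| + 1 holds if and only if the total number of occurrences of the patterns 321 and 3412 in w equals 1, i.e., either w contains 321 exactly once and avoids 3412, or w contains 3412 exactly once and avoids 321. -/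
namespace Stmt3Aux

variable {n : ℕ}

def InvSet (w : Equiv.Perm (Fin n)) : Finset (Fin n × Fin n) :=
  Finset.univ.filter (fun p => p.1 < p.2 ∧ w p.2 < w p.1)

def invNum (w : Equiv.Perm (Fin n)) : ℕ := (InvSet w).card

def ESet (w : Equiv.Perm (Fin n)) : Set ℕ :=
  {m | ∃ a b : Fin n, (a : ℕ) < m ∧ m ≤ (b : ℕ) ∧ w b < w a}

lemma mem_InvSet {w : Equiv.Perm (Fin n)} {p : Fin n × Fin n} :
    p ∈ InvSet w ↔ p.1 < p.2 ∧ w p.2 < w p.1 := by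
  simp [InvSet]

lemma swap_lt {i j x y : Fin n} (hij : (i : ℕ) + 1 = j) (hxy : x < y)
    (hne : ¬(x = i ∧ y = j)) : Equiv.swap i j x < Equiv.swap i j y := by
  rw [Equiv.swap_apply_def, Equiv.swap_apply_def]
  split_ifs <;> simp only [Fin.ext_iff, Fin.lt_def, not_and] at * <;> omega

lemma mul_swap_cancel (w : Equiv.Perm (Fin n)) (i j : Fin n) :
    (w * Equiv.swap i j) * Equiv.swap i j = w := by
  rw [mul_assoc, Equiv.swap_mul_self, mul_one]

lemma invNum_descent (w : Equiv.Perm (Fin n)) (i j : Fin n) (hij : (i : ℕ) + 1 = j)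
    (hd : w j < w i) : invNum (w * Equiv.swap i j) + 1 = invNum w := by
  have hijlt : i < j := by rw [Fin.lt_def]; omega
  have hmem : (i, j) ∈ InvSet w := mem_InvSet.mpr ⟨hijlt, hd⟩
  have hcard : (InvSet (w * Equiv.swap i j)).card = ((InvSet w).erase (i, j)).card := by
    apply Finset.card_bij' (i := fun p _ => (Equiv.swap i j p.1, Equiv.swap i j p.2))
      (j := fun p _ => (Equiv.swap i j p.1, Equiv.swap i j p.2))
    · intro p hp
      rw [mem_InvSet] at hp
      obtain ⟨h1, h2⟩ := hp
      simp only [Equiv.Perm.mul_apply] at h2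
      have hnij : ¬(p.1 = i ∧ p.2 = j) := by
        rintro ⟨e1, e2⟩
        rw [e1, e2] at h2
        rw [Equiv.swap_apply_left, Equiv.swap_apply_right] at h2
        exact absurd hd (lt_asymm h2)
      rw [Finset.mem_erase, mem_InvSet]
      refine ⟨?_, swap_lt hij h1 hnij, ?_⟩
      · intro hEq
        have e1 : Equiv.swap i j p.1 = i := congrArg Prod.fst hEq
        have e2 : Equiv.swap i j p.2 = j := congrArg Prod.snd hEq
        have : p.1 = j := by
          have := congrArg (Equiv.swap i j) e1
          rwa [Equiv.swap_apply_self, Equiv.swap_apply_left] at this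
        have : p.2 = i := by
          have := congrArg (Equiv.swap i j) e2
          rwa [Equiv.swap_apply_self, Equiv.swap_apply_right] at this
        rw [Fin.lt_def] at h1; omega
      · exact h2
    · intro p hp
      rw [Finset.mem_erase, mem_InvSet] at hp
      obtain ⟨hne, h1, h2⟩ := hp
      have hnij : ¬(p.1 = i ∧ p.2 = j) := by
        rintro ⟨e1, e2⟩; exact hne (by rw [← e1, ← e2])
      rw [mem_InvSet]
      refine ⟨swap_lt hij h1 hnij, ?_⟩
      dsimp only
      simp only [Equiv.Perm.mul_apply]
      rwa [Equiv.swap_apply_self, Equiv.swap_apply_self]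
    · intro p _; simp [Equiv.swap_apply_self]
    · intro p _; simp [Equiv.swap_apply_self]
  have hpos : 0 < (InvSet w).card := Finset.card_pos.mpr ⟨_, hmem⟩
  have := Finset.card_erase_of_mem hmem
  unfold invNum
  omega

lemma invNum_ascent (w : Equiv.Perm (Fin n)) (i j : Fin n) (hij : (i : ℕ) + 1 = j)
    (ha : w i < w j) : invNum (w * Equiv.swap i j) = invNum w + 1 := by
  have hd : (w * Equiv.swap i j) j < (w * Equiv.swap i j) i := by
    simp only [Equiv.Perm.mul_apply, Equiv.swap_apply_left, Equiv.swap_apply_right]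
    exact ha
  have := invNum_descent (w * Equiv.swap i j) i j hij hd
  rwa [mul_swap_cancel, eq_comm] at this

lemma invNum_one : invNum (1 : Equiv.Perm (Fin n)) = 0 := by
  rw [invNum, InvSet, Finset.card_eq_zero, Finset.filter_eq_empty_iff]
  rintro p - ⟨h1, h2⟩
  simp only [Equiv.Perm.one_apply] at h2
  exact lt_asymm h1 h2

lemma simpleT_eq (d : ℕ) (h1 : 1 ≤ d) (h2 : d < n) :
    simpleT n d = Equiv.swap ⟨d - 1, by omega⟩ ⟨d, h2⟩ := dif_pos ⟨h1, h2⟩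

lemma simpleT_invalid (d : ℕ) (h : ¬(1 ≤ d ∧ d < n)) : simpleT n d = 1 := dif_neg h

lemma exists_descent (w : Equiv.Perm (Fin n)) (h : invNum w ≠ 0) :
    ∃ i j : Fin n, (i : ℕ) + 1 = (j : ℕ) ∧ w j < w i := by
  by_contra hno
  push_neg at hno
  have H : ∀ k (hk : k + 1 < n), w ⟨k, by omega⟩ < w ⟨k + 1, hk⟩ := by
    intro k hk
    have h1 := hno ⟨k, by omega⟩ ⟨k + 1, hk⟩ rfl
    have h2 : w ⟨k, by omega⟩ ≠ w ⟨k + 1, hk⟩ := by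
      intro hEq
      have := w.injective hEq
      simp only [Fin.ext_iff] at this
      omega
    exact lt_of_le_of_ne h1 h2
  have mono : ∀ q (hq : q < n) p (hpq : p < q), w ⟨p, by omega⟩ < w ⟨q, hq⟩ := by
    intro q
    induction q with
    | zero => intro _ p hpq; omega
    | succ q IH =>
      intro hq p hpq
      rcases Nat.lt_or_ge p q with h | h
      · exact lt_trans (IH (by omega) p h) (H q hq)
      · have : p = q := by omega
        subst this
        exact H p hq
  have hne : (InvSet w).Nonempty := Finset.card_pos.mp (Nat.pos_of_ne_zero h)
  obtain ⟨⟨a, b⟩, hmem⟩ := hne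
  rw [mem_InvSet] at hmem
  obtain ⟨hab, hinv⟩ := hmem
  rw [Fin.lt_def] at hab
  have := mono b b.isLt a hab
  simp only [Fin.eta] at this
  exact lt_asymm this hinv

lemma invNum_eq_zero_iff {w : Equiv.Perm (Fin n)} : invNum w = 0 ↔ w = 1 := by
  constructor
  · intro h
    have hs : ∀ a b : Fin n, a < b → w a < w b := by
      intro a b hab
      have hnotin : (a, b) ∉ InvSet w := by
        rw [invNum, Finset.card_eq_zero] at h
        rw [h]; exact Finset.notMem_empty _
      rw [mem_InvSet] at hnotin
      push_neg at hnotin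
      have hle := hnotin hab
      have hne : w a ≠ w b := fun hEq => (ne_of_lt hab) (w.injective hEq)
      exact lt_of_le_of_ne (not_lt.mp (by exact fun hc => absurd hle (not_le.mpr hc))) hne
    -- strictMono: w x ≥ x and w⁻¹ similar
    have hsm : StrictMono w := fun a b hab => hs a b hab
    have hsi : StrictMono ⇑w⁻¹ := by
      intro a b hab
      rcases lt_trichotomy (w⁻¹ a) (w⁻¹ b) with h' | h' | h'
      · exact h'
      · exact absurd (w⁻¹.injective h') (ne_of_lt hab)
      · have := hsm h'
        rw [Equiv.Perm.coe_inv, Equiv.apply_symm_apply, Equiv.apply_symm_apply] at this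
        exact absurd hab (lt_asymm this)
    have hge : ∀ (f : Equiv.Perm (Fin n)), StrictMono ⇑f →
        ∀ k (hk : k < n), k ≤ ((f ⟨k, hk⟩ : Fin n) : ℕ) := by
      intro f hf k
      induction k with
      | zero => intro hk; exact Nat.zero_le _
      | succ k IH =>
        intro hk
        have h1 : ((f ⟨k, Nat.lt_of_succ_lt hk⟩ : Fin n) : ℕ) < ((f ⟨k + 1, hk⟩ : Fin n) : ℕ) :=
          Fin.lt_def.mp (hf (Fin.mk_lt_mk.mpr (Nat.lt_succ_self k)))
        have h2 : k ≤ ((f ⟨k, Nat.lt_of_succ_lt hk⟩ : Fin n) : ℕ) := IH (Nat.lt_of_succ_lt hk)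
        show k + 1 ≤ _
        omega
    ext x
    have h1 : (x : ℕ) ≤ ((w x : Fin n) : ℕ) := by
      have := hge w hsm x.val x.isLt
      simpa only [Fin.eta] using this
    have h2 : ((w x : Fin n) : ℕ) ≤ (x : ℕ) := by
      have := hge w⁻¹ hsi (w x).val (w x).isLt
      simp only [Fin.eta] at this
      rwa [Equiv.Perm.coe_inv, Equiv.symm_apply_apply] at this
    simp only [Equiv.Perm.one_apply]
    exact Nat.le_antisymm h2 h1
  · rintro rfl; exact invNum_one

lemma invNum_le_word (word : List ℕ) :
    invNum ((word.map (simpleT n)).prod) ≤ word.length := by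
  induction word using List.reverseRecOn with
  | nil => simp [invNum_one]
  | append_singleton word d IH =>
    rw [List.map_append, List.prod_append]
    simp only [List.map_cons, List.map_nil, List.prod_cons, List.prod_nil, mul_one,
      List.length_append, List.length_cons, List.length_nil]
    set v := (word.map (simpleT n)).prod with hv
    by_cases hval : 1 ≤ d ∧ d < n
    · rw [simpleT_eq d hval.1 hval.2]
      set i : Fin n := ⟨d - 1, by omega⟩ with hi
      set j : Fin n := ⟨d, hval.2⟩ with hj
      have hij : (i : ℕ) + 1 = (j : ℕ) := by
        rw [hi, hj]; show d - 1 + 1 = d; omega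
      rcases lt_trichotomy (v i) (v j) with h | h | h
      · rw [invNum_ascent v i j hij h]; omega
      · exfalso
        have hne : d - 1 = d := congrArg Fin.val (v.injective h)
        omega
      · have := invNum_descent v i j hij h; omega
    · rw [simpleT_invalid d hval, mul_one]; omega

lemma exists_word (w : Equiv.Perm (Fin n)) :
    ∃ word : List ℕ, (word.map (simpleT n)).prod = w ∧ word.length = invNum w := by
  suffices h : ∀ N (w : Equiv.Perm (Fin n)), invNum w ≤ N →
      ∃ word : List ℕ, (word.map (simpleT n)).prod = w ∧ word.length = invNum w from
    h (invNum w) w le_rfl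
  intro N
  induction N with
  | zero =>
    intro w hw
    have h1 : w = 1 := invNum_eq_zero_iff.mp (Nat.le_zero.mp hw)
    subst h1
    exact ⟨[], by simp, by simp [invNum_one]⟩
  | succ N IH =>
    intro w hw
    by_cases h0 : invNum w = 0
    · have h1 : w = 1 := invNum_eq_zero_iff.mp h0
      subst h1
      exact ⟨[], by simp, by simp [invNum_one]⟩
    · obtain ⟨i, j, hij, hd⟩ := exists_descent w h0
      have hstep := invNum_descent w i j hij hd
      obtain ⟨word, hp, hl⟩ := IH (w * Equiv.swap i j) (by omega)
      have hjval : 1 ≤ (j : ℕ) ∧ (j : ℕ) < n := ⟨by omega, j.isLt⟩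
      have hs : simpleT n (j : ℕ) = Equiv.swap i j := by
        rw [simpleT_eq (j : ℕ) hjval.1 hjval.2]
        congr 1
        exact Fin.ext (show (j : ℕ) - 1 = (i : ℕ) by omega)
      refine ⟨word ++ [(j : ℕ)], ?_, ?_⟩
      · rw [List.map_append, List.prod_append]
        simp only [List.map_cons, List.map_nil, List.prod_cons, List.prod_nil, mul_one]
        rw [hs, hp, mul_swap_cancel]
      · simp only [List.length_append, List.length_cons, List.length_nil]
        omega

lemma permLen_eq (w : Equiv.Perm (Fin n)) : permLen n w = invNum w := by
  obtain ⟨word, hp, hl⟩ := exists_word w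
  have hmem : invNum w ∈ {l : ℕ | ∃ word : List ℕ,
      word.length = l ∧ (word.map (simpleT n)).prod = w} := ⟨word, hl, hp⟩
  apply le_antisymm
  · exact Nat.sInf_le hmem
  · obtain ⟨word', hl', hp'⟩ := Nat.sInf_mem (⟨_, hmem⟩ : Set.Nonempty _)
    calc invNum w = invNum ((word'.map (simpleT n)).prod) := by rw [hp']
    _ ≤ word'.length := invNum_le_word _
    _ = _ := hl'
lemma swap_coe_lt {i j : Fin n} (hij : (i : ℕ) + 1 = j) (a : Fin n) (m : ℕ)
    (hm : (a : ℕ) < m) (hmj : m ≠ (j : ℕ)) : ((Equiv.swap i j a : Fin n) : ℕ) < m := by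
  rw [Equiv.swap_apply_def]
  split_ifs with e1 e2 <;> simp only [Fin.ext_iff] at e1 <;> try simp only [Fin.ext_iff] at e2
  all_goals omega

lemma swap_coe_ge {i j : Fin n} (hij : (i : ℕ) + 1 = j) (b : Fin n) (m : ℕ)
    (hm : m ≤ (b : ℕ)) (hmj : m ≠ (j : ℕ)) : m ≤ ((Equiv.swap i j b : Fin n) : ℕ) := by
  rw [Equiv.swap_apply_def]
  split_ifs with e1 e2 <;> simp only [Fin.ext_iff] at e1 <;> try simp only [Fin.ext_iff] at e2
  all_goals omega

lemma ESet_descent (w : Equiv.Perm (Fin n)) (i j : Fin n) (hij : (i : ℕ) + 1 = j)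
    (hd : w j < w i) : ESet (w * Equiv.swap i j) ∪ {(j : ℕ)} = ESet w := by
  ext m
  simp only [Set.mem_union, Set.mem_singleton_iff, ESet, Set.mem_setOf_eq]
  constructor
  · rintro (⟨a, b, h1, h2, h3⟩ | rfl)
    · by_cases hmj : m = (j : ℕ)
      · exact ⟨i, j, by omega, by omega, hd⟩
      · simp only [Equiv.Perm.mul_apply] at h3
        exact ⟨Equiv.swap i j a, Equiv.swap i j b, swap_coe_lt hij a m h1 hmj,
          swap_coe_ge hij b m h2 hmj, h3⟩
    · exact ⟨i, j, by omega, by omega, hd⟩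
  · rintro ⟨a, b, h1, h2, h3⟩
    by_cases hmj : m = (j : ℕ)
    · right; exact hmj
    · left
      refine ⟨Equiv.swap i j a, Equiv.swap i j b, swap_coe_lt hij a m h1 hmj,
        swap_coe_ge hij b m h2 hmj, ?_⟩
      simp only [Equiv.Perm.mul_apply, Equiv.swap_apply_self]
      exact h3

lemma ESet_finite (w : Equiv.Perm (Fin n)) : (ESet w).Finite := by
  apply (Set.finite_Iio n).subset
  rintro m ⟨a, b, _, h2, _⟩
  exact lt_of_le_of_lt h2 b.isLt

lemma ncard_ESet_descent_mem (w : Equiv.Perm (Fin n)) (i j : Fin n) (hij : (i : ℕ) + 1 = j)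
    (hd : w j < w i) (h : (j : ℕ) ∈ ESet (w * Equiv.swap i j)) :
    (ESet w).ncard = (ESet (w * Equiv.swap i j)).ncard := by
  rw [← ESet_descent w i j hij hd, Set.union_singleton, Set.insert_eq_self.mpr h]

lemma ncard_ESet_descent_notmem (w : Equiv.Perm (Fin n)) (i j : Fin n) (hij : (i : ℕ) + 1 = j)
    (hd : w j < w i) (h : (j : ℕ) ∉ ESet (w * Equiv.swap i j)) :
    (ESet w).ncard = (ESet (w * Equiv.swap i j)).ncard + 1 := by
  rw [← ESet_descent w i j hij hd, Set.union_singleton,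
    Set.ncard_insert_of_notMem h (ESet_finite _)]

lemma ESet_one : ESet (1 : Equiv.Perm (Fin n)) = ∅ := by
  ext m
  simp only [ESet, Set.mem_setOf_eq, Set.mem_empty_iff_false, iff_false]
  rintro ⟨a, b, h1, h2, h3⟩
  simp only [Equiv.Perm.one_apply, Fin.lt_def] at h3
  omega

lemma ncard_ESet_le (w : Equiv.Perm (Fin n)) : (ESet w).ncard ≤ invNum w := by
  suffices h : ∀ N (w : Equiv.Perm (Fin n)), invNum w ≤ N → (ESet w).ncard ≤ invNum w from
    h (invNum w) w le_rfl
  intro N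
  induction N with
  | zero =>
    intro w hw
    have h1 : w = 1 := invNum_eq_zero_iff.mp (Nat.le_zero.mp hw)
    subst h1
    rw [ESet_one, invNum_one]
    simp
  | succ N IH =>
    intro w hw
    by_cases h0 : invNum w = 0
    · have h1 : w = 1 := invNum_eq_zero_iff.mp h0
      subst h1
      rw [ESet_one, invNum_one]; simp
    · obtain ⟨i, j, hij, hd⟩ := exists_descent w h0
      have hstep := invNum_descent w i j hij hd
      have hIH := IH (w * Equiv.swap i j) (by omega)
      by_cases h : (j : ℕ) ∈ ESet (w * Equiv.swap i j)
      · have hE := ncard_ESet_descent_mem w i j hij hd h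
        omega
      · have hE := ncard_ESet_descent_notmem w i j hij hd h
        omega

lemma letters_eq (word : List ℕ) : ∀ w : Equiv.Perm (Fin n),
    (word.map (simpleT n)).prod = w → word.length = invNum w →
    ∀ x, x ∈ word ↔ x ∈ ESet w := by
  induction word using List.reverseRecOn with
  | nil =>
    intro w hp hl x
    simp only [List.prod_nil, List.map_nil] at hp
    subst hp
    rw [ESet_one]
    simp
  | append_singleton word d IH =>
    intro w hp hl x
    rw [List.map_append, List.prod_append] at hp
    simp only [List.map_cons, List.map_nil, List.prod_cons, List.prod_nil, mul_one] at hp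
    rw [List.length_append, List.length_cons, List.length_nil] at hl
    set v := (word.map (simpleT n)).prod with hv
    have hle : invNum v ≤ word.length := invNum_le_word word
    by_cases hval : 1 ≤ d ∧ d < n
    · rw [simpleT_eq d hval.1 hval.2] at hp
      set i : Fin n := ⟨d - 1, by omega⟩ with hi
      set j : Fin n := ⟨d, hval.2⟩ with hj
      have hij : (i : ℕ) + 1 = (j : ℕ) := by
        rw [hi, hj]; show d - 1 + 1 = d; omega
      rcases lt_trichotomy (v i) (v j) with h | h | h
      · -- ascent of v, so descent of w
        have hwv : invNum w = invNum v + 1 := by rw [← hp]; exact invNum_ascent v i j hij h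
        have hred : word.length = invNum v := by omega
        have hIH := IH v rfl hred
        have hwd : w j < w i := by
          rw [← hp]
          simp only [Equiv.Perm.mul_apply, Equiv.swap_apply_left, Equiv.swap_apply_right]
          exact h
        have hback : w * Equiv.swap i j = v := by rw [← hp, mul_swap_cancel]
        have hE := ESet_descent w i j hij hwd
        rw [hback] at hE
        have hxd : x ∈ word ++ [d] ↔ x ∈ word ∨ x = d := by
          simp [List.mem_append]
        rw [hxd, ← hE]
        have hdj : d = (j : ℕ) := rfl
        rw [Set.mem_union, Set.mem_singleton_iff, hIH, hdj]
      · exfalso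
        have hne : d - 1 = d := congrArg Fin.val (v.injective h)
        omega
      · exfalso
        have := invNum_descent v i j hij h
        rw [hp] at this
        omega
    · rw [simpleT_invalid d hval, mul_one] at hp
      subst hp
      omega

lemma permSupp_eq (w : Equiv.Perm (Fin n)) : permSupp n w = ESet w := by
  ext x
  constructor
  · rintro ⟨word, ⟨hp, hl⟩, hmem⟩
    rw [permLen_eq] at hl
    exact ((letters_eq word w hp hl) x).mp hmem
  · intro hx
    obtain ⟨word, hp, hl⟩ := exists_word w
    exact ⟨word, ⟨hp, by rw [permLen_eq]; exact hl⟩, ((letters_eq word w hp hl) x).mpr hx⟩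

lemma exists_fin3 {P : Fin 3 → Prop} : (∃ a, P a) ↔ P 0 ∨ P 1 ∨ P 2 := by
  constructor
  · rintro ⟨a, ha⟩
    fin_cases a
    · exact Or.inl ha
    · exact Or.inr (Or.inl ha)
    · exact Or.inr (Or.inr ha)
  · rintro (h | h | h) <;> exact ⟨_, h⟩

lemma exists_fin4 {P : Fin 4 → Prop} : (∃ a, P a) ↔ P 0 ∨ P 1 ∨ P 2 ∨ P 3 := by
  constructor
  · rintro ⟨a, ha⟩
    fin_cases a
    · exact Or.inl ha
    · exact Or.inr (Or.inl ha)
    · exact Or.inr (Or.inr (Or.inl ha))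
    · exact Or.inr (Or.inr (Or.inr ha))
  · rintro (h | h | h | h) <;> exact ⟨_, h⟩

lemma isOcc321_iff (w : Equiv.Perm (Fin n)) (t : Fin 3 → Fin n) :
    IsPatternOcc w pattern321 t ↔
      t 0 < t 1 ∧ t 1 < t 2 ∧ w (t 2) < w (t 1) ∧ w (t 1) < w (t 0) := by
  constructor
  · rintro ⟨hm, hv⟩
    exact ⟨hm (by decide), hm (by decide),
      (hv 2 1).mpr (by decide), (hv 1 0).mpr (by decide)⟩
  · rintro ⟨h01, h12, hv21, hv10⟩
    have h20 : w (t 2) < w (t 0) := hv21.trans hv10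
    constructor
    · intro a b hab
      fin_cases a <;> fin_cases b <;>
        first
          | exact absurd hab (by decide)
          | exact h01
          | exact h12
          | exact h01.trans h12
    · intro a b
      fin_cases a <;> fin_cases b
      · exact iff_of_false (lt_irrefl _) (by decide)
      · exact iff_of_false (asymm hv10) (by decide)
      · exact iff_of_false (asymm h20) (by decide)
      · exact iff_of_true hv10 (by decide)
      · exact iff_of_false (lt_irrefl _) (by decide)
      · exact iff_of_false (asymm hv21) (by decide)
      · exact iff_of_true h20 (by decide)
      · exact iff_of_true hv21 (by decide)
      · exact iff_of_false (lt_irrefl _) (by decide)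

lemma isOcc3412_iff (w : Equiv.Perm (Fin n)) (t : Fin 4 → Fin n) :
    IsPatternOcc w pattern3412 t ↔
      t 0 < t 1 ∧ t 1 < t 2 ∧ t 2 < t 3 ∧
        w (t 2) < w (t 3) ∧ w (t 3) < w (t 0) ∧ w (t 0) < w (t 1) := by
  constructor
  · rintro ⟨hm, hv⟩
    exact ⟨hm (by decide), hm (by decide), hm (by decide),
      (hv 2 3).mpr (by decide), (hv 3 0).mpr (by decide), (hv 0 1).mpr (by decide)⟩
  · rintro ⟨h01, h12, h23, v23, v30, v01⟩
    have v20 : w (t 2) < w (t 0) := v23.trans v30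
    have v21 : w (t 2) < w (t 1) := v20.trans v01
    have v31 : w (t 3) < w (t 1) := v30.trans v01
    constructor
    · intro a b hab
      fin_cases a <;> fin_cases b <;>
        first
          | exact absurd hab (by decide)
          | exact h01
          | exact h12
          | exact h23
          | exact h01.trans h12
          | exact h12.trans h23
          | exact (h01.trans h12).trans h23
    · intro a b
      fin_cases a <;> fin_cases b
      · exact iff_of_false (lt_irrefl _) (by decide)
      · exact iff_of_true v01 (by decide)
      · exact iff_of_false (asymm v20) (by decide)
      · exact iff_of_false (asymm v30) (by decide)
      · exact iff_of_false (asymm v01) (by decide)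
      · exact iff_of_false (lt_irrefl _) (by decide)
      · exact iff_of_false (asymm v21) (by decide)
      · exact iff_of_false (asymm v31) (by decide)
      · exact iff_of_true v20 (by decide)
      · exact iff_of_true v21 (by decide)
      · exact iff_of_false (lt_irrefl _) (by decide)
      · exact iff_of_true v23 (by decide)
      · exact iff_of_true v30 (by decide)
      · exact iff_of_true v31 (by decide)
      · exact iff_of_false (asymm v23) (by decide)
      · exact iff_of_false (lt_irrefl _) (by decide)

lemma occ321_mk (w : Equiv.Perm (Fin n)) (a b c : Fin n) (h1 : a < b) (h2 : b < c)
    (h3 : w c < w b) (h4 : w b < w a) : IsPatternOcc w pattern321 ![a, b, c] := by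
  rw [isOcc321_iff]
  refine ⟨?_, ?_, ?_, ?_⟩ <;> simpa using ‹_›

lemma occ3412_mk (w : Equiv.Perm (Fin n)) (a b c d : Fin n) (h1 : a < b) (h2 : b < c)
    (h3 : c < d) (h4 : w c < w d) (h5 : w d < w a) (h6 : w a < w b) :
    IsPatternOcc w pattern3412 ![a, b, c, d] := by
  rw [isOcc3412_iff]
  refine ⟨?_, ?_, ?_, ?_, ?_, ?_⟩ <;> simpa using ‹_›

lemma transfer_occ {k : ℕ} (w : Equiv.Perm (Fin n)) (i j : Fin n) (hij : (i : ℕ) + 1 = j)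
    (p : Equiv.Perm (Fin k)) (t : Fin k → Fin n) (h : IsPatternOcc w p t)
    (hnb : ¬((∃ a, t a = i) ∧ (∃ b, t b = j))) :
    IsPatternOcc (w * Equiv.swap i j) p (fun a => Equiv.swap i j (t a)) := by
  obtain ⟨hm, hv⟩ := h
  constructor
  · intro a b hab
    apply swap_lt hij (hm hab)
    rintro ⟨e1, e2⟩
    exact hnb ⟨⟨a, e1⟩, ⟨b, e2⟩⟩
  · intro a b
    simp only [Equiv.Perm.mul_apply, Equiv.swap_apply_self]
    exact hv a b

lemma notexists3 {x y z v : Fin n} (h0 : x ≠ v) (h1 : y ≠ v) (h2 : z ≠ v) :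
    ¬ ∃ a : Fin 3, ![x, y, z] a = v := by
  rintro ⟨a, ha⟩
  fin_cases a
  · exact h0 (by simpa using ha)
  · exact h1 (by simpa using ha)
  · exact h2 (by simpa using ha)

lemma notexists4 {x y z u v : Fin n} (h0 : x ≠ v) (h1 : y ≠ v) (h2 : z ≠ v) (h3 : u ≠ v) :
    ¬ ∃ a : Fin 4, ![x, y, z, u] a = v := by
  rintro ⟨a, ha⟩
  fin_cases a
  · exact h0 (by simpa using ha)
  · exact h1 (by simpa using ha)
  · exact h2 (by simpa using ha)
  · exact h3 (by simpa using ha)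

lemma vne {a b : Fin n} (h : (a : ℕ) ≠ (b : ℕ)) : a ≠ b := Fin.ne_of_val_ne h

lemma vlt {a b : Fin n} (h : (a : ℕ) < (b : ℕ)) : a < b := Fin.lt_def.mpr h


lemma wp_left (w : Equiv.Perm (Fin n)) (i j : Fin n) : (w * Equiv.swap i j) i = w j := by
  simp [Equiv.Perm.mul_apply]

lemma wp_right (w : Equiv.Perm (Fin n)) (i j : Fin n) : (w * Equiv.swap i j) j = w i := by
  simp [Equiv.Perm.mul_apply]

lemma wp_other (w : Equiv.Perm (Fin n)) (i j : Fin n) (x : Fin n) (h1 : x ≠ i) (h2 : x ≠ j) :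
    (w * Equiv.swap i j) x = w x := by
  simp [Equiv.Perm.mul_apply, Equiv.swap_apply_of_ne_of_ne h1 h2]

lemma shape321 (w : Equiv.Perm (Fin n)) (i j : Fin n) (hij : (i : ℕ) + 1 = j)
    (t : Fin 3 → Fin n) (h : IsPatternOcc w pattern321 t)
    (hi : ∃ a, t a = i) (hj : ∃ a, t a = j) :
    (t 0 = i ∧ t 1 = j) ∨ (t 1 = i ∧ t 2 = j) := by
  rw [isOcc321_iff] at h
  obtain ⟨h01, h12, -, -⟩ := h
  rw [exists_fin3] at hi hj
  rw [Fin.lt_def] at h01 h12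
  rcases hi with e | e | e <;> rcases hj with f | f | f
  all_goals try (exact Or.inl ⟨e, f⟩)
  all_goals try (exact Or.inr ⟨e, f⟩)
  all_goals
    (exfalso; have he := congrArg Fin.val e; have hf := congrArg Fin.val f; omega)

lemma shape3412 (w : Equiv.Perm (Fin n)) (i j : Fin n) (hij : (i : ℕ) + 1 = j)
    (hd : w j < w i) (t : Fin 4 → Fin n) (h : IsPatternOcc w pattern3412 t)
    (hi : ∃ a, t a = i) (hj : ∃ a, t a = j) : t 1 = i ∧ t 2 = j := by
  rw [isOcc3412_iff] at h
  obtain ⟨h01, h12, h23, v23, v30, v01⟩ := h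
  rw [exists_fin4] at hi hj
  rw [Fin.lt_def] at h01 h12 h23
  rcases hi with e | e | e | e <;> rcases hj with f | f | f | f
  all_goals try (exact ⟨e, f⟩)
  all_goals try (exfalso; rw [e, f] at v01; exact absurd v01 (asymm hd))
  all_goals try (exfalso; rw [e, f] at v23; exact absurd v23 (asymm hd))
  all_goals
    (exfalso; have he := congrArg Fin.val e; have hf := congrArg Fin.val f; omega)

lemma shape3412_asc (u : Equiv.Perm (Fin n)) (i j : Fin n) (hij : (i : ℕ) + 1 = j)
    (ha : u i < u j) (t : Fin 4 → Fin n) (h : IsPatternOcc u pattern3412 t)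
    (hi : ∃ a, t a = i) (hj : ∃ a, t a = j) :
    (t 0 = i ∧ t 1 = j) ∨ (t 2 = i ∧ t 3 = j) := by
  rw [isOcc3412_iff] at h
  obtain ⟨h01, h12, h23, v23, v30, v01⟩ := h
  have v21 : u (t 2) < u (t 1) := v23.trans (v30.trans v01)
  rw [exists_fin4] at hi hj
  rw [Fin.lt_def] at h01 h12 h23
  rcases hi with e | e | e | e <;> rcases hj with f | f | f | f
  all_goals try (exact Or.inl ⟨e, f⟩)
  all_goals try (exact Or.inr ⟨e, f⟩)
  all_goals try (exfalso; rw [e, f] at v21; exact absurd v21 (asymm ha))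
  all_goals
    (exfalso; have he := congrArg Fin.val e; have hf := congrArg Fin.val f; omega)

lemma crossing_to_occ (w : Equiv.Perm (Fin n)) (i j : Fin n) (hij : (i : ℕ) + 1 = j)
    (hd : w j < w i) (h : (j : ℕ) ∈ ESet (w * Equiv.swap i j)) :
    (∃ t, IsPatternOcc w pattern321 t ∧ (∃ a, t a = i) ∧ (∃ a, t a = j)) ∨
    (∃ t, IsPatternOcc w pattern3412 t ∧ (∃ a, t a = i) ∧ (∃ a, t a = j)) := by
  obtain ⟨a, b, ha, hb, hv⟩ := h
  have hbne_i : b ≠ i := vne (by omega)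
  by_cases hai : a = i
  · rw [hai] at hv
    by_cases hbj : b = j
    · rw [hbj, wp_left, wp_right] at hv
      exact absurd hv (asymm hd)
    · have hbj' : (b : ℕ) ≠ (j : ℕ) := Fin.val_ne_of_ne hbj
      rw [wp_other w i j b hbne_i hbj, wp_left] at hv
      left
      exact ⟨![i, j, b], occ321_mk w i j b (vlt (by omega)) (vlt (by omega)) hv hd,
        ⟨0, rfl⟩, ⟨1, rfl⟩⟩
  · have hai' : (a : ℕ) ≠ (i : ℕ) := Fin.val_ne_of_ne hai
    have haj : a ≠ j := vne (by omega)
    have hva : (w * Equiv.swap i j) a = w a := wp_other w i j a hai haj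
    by_cases hbj : b = j
    · rw [hbj, wp_right, hva] at hv
      left
      exact ⟨![a, i, j], occ321_mk w a i j (vlt (by omega)) (vlt (by omega)) hd hv,
        ⟨1, rfl⟩, ⟨2, rfl⟩⟩
    · have hbj' : (b : ℕ) ≠ (j : ℕ) := Fin.val_ne_of_ne hbj
      rw [wp_other w i j b hbne_i hbj, hva] at hv
      rcases lt_trichotomy (w i) (w a) with hia | hia | hia
      · left
        exact ⟨![a, i, j], occ321_mk w a i j (vlt (by omega)) (vlt (by omega)) hd hia,
          ⟨1, rfl⟩, ⟨2, rfl⟩⟩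
      · exact absurd (w.injective hia).symm hai
      · rcases lt_trichotomy (w j) (w b) with hjb | hjb | hjb
        · right
          exact ⟨![a, i, j, b], occ3412_mk w a i j b (vlt (by omega)) (vlt (by omega))
            (vlt (by omega)) hjb hv hia, ⟨1, rfl⟩, ⟨2, rfl⟩⟩
        · exact absurd (w.injective hjb).symm hbj
        · left
          exact ⟨![i, j, b], occ321_mk w i j b (vlt (by omega)) (vlt (by omega)) hjb hd,
            ⟨0, rfl⟩, ⟨1, rfl⟩⟩

lemma both321_crossing (w : Equiv.Perm (Fin n)) (i j : Fin n) (hij : (i : ℕ) + 1 = j)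
    (t : Fin 3 → Fin n) (h : IsPatternOcc w pattern321 t)
    (hi : ∃ a, t a = i) (hj : ∃ a, t a = j) : (j : ℕ) ∈ ESet (w * Equiv.swap i j) := by
  rcases shape321 w i j hij t h hi hj with ⟨e0, e1⟩ | ⟨e1, e2⟩ <;>
    rw [isOcc321_iff] at h <;> obtain ⟨h01, h12, v21, v10⟩ := h
  · have he1 := congrArg Fin.val e1
    have h12' := Fin.lt_def.mp h12
    refine ⟨i, t 2, by omega, by omega, ?_⟩
    rw [wp_other w i j (t 2) (vne (by omega)) (vne (by omega)), wp_left, ← e1]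
    exact v21
  · have he1 := congrArg Fin.val e1
    have h01' := Fin.lt_def.mp h01
    refine ⟨t 0, j, by omega, le_refl _, ?_⟩
    rw [wp_right, wp_other w i j (t 0) (vne (by omega)) (vne (by omega)), ← e1]
    exact v10

lemma both3412_crossing (w : Equiv.Perm (Fin n)) (i j : Fin n) (hij : (i : ℕ) + 1 = j)
    (hd : w j < w i) (t : Fin 4 → Fin n) (h : IsPatternOcc w pattern3412 t)
    (hi : ∃ a, t a = i) (hj : ∃ a, t a = j) : (j : ℕ) ∈ ESet (w * Equiv.swap i j) := by
  obtain ⟨e1, e2⟩ := shape3412 w i j hij hd t h hi hj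
  rw [isOcc3412_iff] at h
  obtain ⟨h01, h12, h23, v23, v30, v01⟩ := h
  have he1 := congrArg Fin.val e1
  have he2 := congrArg Fin.val e2
  have h01' := Fin.lt_def.mp h01
  have h23' := Fin.lt_def.mp h23
  refine ⟨t 0, t 3, by omega, by omega, ?_⟩
  rw [wp_other w i j (t 3) (vne (by omega)) (vne (by omega)),
    wp_other w i j (t 0) (vne (by omega)) (vne (by omega))]
  exact v30

lemma both321_wp_false (w : Equiv.Perm (Fin n)) (i j : Fin n) (hij : (i : ℕ) + 1 = j)
    (hd : w j < w i) (t : Fin 3 → Fin n)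
    (h : IsPatternOcc (w * Equiv.swap i j) pattern321 t)
    (hi : ∃ a, t a = i) (hj : ∃ a, t a = j) : False := by
  rcases shape321 (w * Equiv.swap i j) i j hij t h hi hj with ⟨e0, e1⟩ | ⟨e1, e2⟩ <;>
    rw [isOcc321_iff] at h <;> obtain ⟨h01, h12, v21, v10⟩ := h
  · rw [e0, e1, wp_left, wp_right] at v10
    exact absurd v10 (asymm hd)
  · rw [e1, e2, wp_left, wp_right] at v21
    exact absurd v21 (asymm hd)

lemma both3412_wp_two (w : Equiv.Perm (Fin n)) (i j : Fin n) (hij : (i : ℕ) + 1 = j)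
    (hd : w j < w i) (t : Fin 4 → Fin n)
    (h : IsPatternOcc (w * Equiv.swap i j) pattern3412 t)
    (hi : ∃ a, t a = i) (hj : ∃ a, t a = j) :
    ∃ t1 t2 : Fin 3 → Fin n, IsPatternOcc w pattern321 t1 ∧ IsPatternOcc w pattern321 t2 ∧
      t1 ≠ t2 := by
  have hasc : (w * Equiv.swap i j) i < (w * Equiv.swap i j) j := by
    rw [wp_left, wp_right]; exact hd
  rcases shape3412_asc (w * Equiv.swap i j) i j hij hasc t h hi hj with ⟨e0, e1⟩ | ⟨e2, e3⟩ <;>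
    rw [isOcc3412_iff] at h <;> obtain ⟨h01, h12, h23, v23, v30, v01⟩ := h
  · -- t0 = i, t1 = j; c := t 2, e := t 3
    have he1 := congrArg Fin.val e1
    have h12' := Fin.lt_def.mp h12
    have h23' := Fin.lt_def.mp h23
    have hc1 : t 2 ≠ i := vne (by omega)
    have hc2 : t 2 ≠ j := vne (by omega)
    have he'1 : t 3 ≠ i := vne (by omega)
    have he'2 : t 3 ≠ j := vne (by omega)
    rw [e0] at v30
    rw [wp_left, wp_other w i j (t 3) he'1 he'2] at v30
    rw [wp_other w i j (t 2) hc1 hc2, wp_other w i j (t 3) he'1 he'2] at v23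
    -- v30 : w (t 3) < w j ; v23 : w (t 2) < w (t 3)
    refine ⟨![i, j, t 2], ![i, j, t 3],
      occ321_mk w i j (t 2) (vlt (by omega)) (vlt (by omega)) (v23.trans v30) hd,
      occ321_mk w i j (t 3) (vlt (by omega)) (vlt (by omega)) v30 hd, ?_⟩
    intro hEq
    have h2 : t 2 = t 3 := by simpa using congrFun hEq 2
    have := congrArg Fin.val h2
    omega
  · -- t2 = i, t3 = j; a := t 0, b := t 1
    have he2 := congrArg Fin.val e2
    have h01' := Fin.lt_def.mp h01
    have h12' := Fin.lt_def.mp h12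
    have ha1 : t 0 ≠ i := vne (by omega)
    have ha2 : t 0 ≠ j := vne (by omega)
    have hb1 : t 1 ≠ i := vne (by omega)
    have hb2 : t 1 ≠ j := vne (by omega)
    rw [e3] at v30
    rw [wp_right, wp_other w i j (t 0) ha1 ha2] at v30
    rw [wp_other w i j (t 0) ha1 ha2, wp_other w i j (t 1) hb1 hb2] at v01
    -- v30 : w i < w (t 0) ; v01 : w (t 0) < w (t 1)
    refine ⟨![t 0, i, j], ![t 1, i, j],
      occ321_mk w (t 0) i j (vlt (by omega)) (vlt (by omega)) hd v30,
      occ321_mk w (t 1) i j (vlt (by omega)) (vlt (by omega)) hd (v30.trans v01), ?_⟩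
    intro hEq
    have h2 : t 0 = t 1 := by simpa using congrFun hEq 0
    have := congrArg Fin.val h2
    omega

lemma both3412_wp_crossing (w : Equiv.Perm (Fin n)) (i j : Fin n) (hij : (i : ℕ) + 1 = j)
    (hd : w j < w i) (t : Fin 4 → Fin n)
    (h : IsPatternOcc (w * Equiv.swap i j) pattern3412 t)
    (hi : ∃ a, t a = i) (hj : ∃ a, t a = j) : (j : ℕ) ∈ ESet (w * Equiv.swap i j) := by
  have hasc : (w * Equiv.swap i j) i < (w * Equiv.swap i j) j := by
    rw [wp_left, wp_right]; exact hd
  rcases shape3412_asc (w * Equiv.swap i j) i j hij hasc t h hi hj with ⟨e0, e1⟩ | ⟨e2, e3⟩ <;>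
    rw [isOcc3412_iff] at h <;> obtain ⟨h01, h12, h23, v23, v30, v01⟩ := h
  · have he1 := congrArg Fin.val e1
    have h12' := Fin.lt_def.mp h12
    refine ⟨i, t 2, by omega, by omega, ?_⟩
    have hgoal := v23.trans v30
    rw [e0] at hgoal
    exact hgoal
  · have he2 := congrArg Fin.val e2
    have h01' := Fin.lt_def.mp h01
    have h12' := Fin.lt_def.mp h12
    refine ⟨t 0, j, by omega, le_refl _, ?_⟩
    rw [e3] at v30
    exact v30

def HasOccP (u : Equiv.Perm (Fin n)) : Prop :=
  (∃ t : Fin 3 → Fin n, IsPatternOcc u pattern321 t) ∨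
  (∃ t : Fin 4 → Fin n, IsPatternOcc u pattern3412 t)

lemma pairA1A1 (w : Equiv.Perm (Fin n)) (i j : Fin n) (hij : (i : ℕ) + 1 = j)
    (hd : w j < w i) (c c' : Fin n) (hc : (j : ℕ) < c) (hc' : (j : ℕ) < c')
    (hlt : (c : ℕ) < (c' : ℕ)) (h1 : w c < w j) (h2 : w c' < w j) :
    HasOccP (w * Equiv.swap i j) := by
  rcases lt_trichotomy (w c) (w c') with hv | hv | hv
  · right
    refine ⟨![i, j, c, c'], occ3412_mk _ i j c c' (vlt (by omega)) (vlt (by omega))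
      (vlt (by omega)) ?_ ?_ ?_⟩
    · rw [wp_other w i j c (vne (by omega)) (vne (by omega)),
        wp_other w i j c' (vne (by omega)) (vne (by omega))]
      exact hv
    · rw [wp_other w i j c' (vne (by omega)) (vne (by omega)), wp_left]
      exact h2
    · rw [wp_left, wp_right]
      exact hd
  · exact absurd (w.injective hv) (vne (by omega))
  · left
    refine ⟨_, transfer_occ w i j hij _ _ (occ321_mk w j c c' (vlt (by omega))
      (vlt (by omega)) hv h1) ?_⟩
    rintro ⟨hex, -⟩
    exact notexists3 (vne (by omega)) (vne (by omega)) (vne (by omega)) hex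

lemma pairA2A2 (w : Equiv.Perm (Fin n)) (i j : Fin n) (hij : (i : ℕ) + 1 = j)
    (hd : w j < w i) (a a' : Fin n) (ha : (a : ℕ) < i) (ha' : (a' : ℕ) < i)
    (hlt : (a : ℕ) < (a' : ℕ)) (h1 : w i < w a) (h2 : w i < w a') :
    HasOccP (w * Equiv.swap i j) := by
  rcases lt_trichotomy (w a) (w a') with hv | hv | hv
  · right
    refine ⟨![a, a', i, j], occ3412_mk _ a a' i j (vlt (by omega)) (vlt (by omega))
      (vlt (by omega)) ?_ ?_ ?_⟩
    · rw [wp_left, wp_right]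
      exact hd
    · rw [wp_right, wp_other w i j a (vne (by omega)) (vne (by omega))]
      exact h1
    · rw [wp_other w i j a (vne (by omega)) (vne (by omega)),
        wp_other w i j a' (vne (by omega)) (vne (by omega))]
      exact hv
  · exact absurd (w.injective hv) (vne (by omega))
  · left
    refine ⟨_, transfer_occ w i j hij _ _ (occ321_mk w a a' i (vlt (by omega))
      (vlt (by omega)) h2 hv) ?_⟩
    rintro ⟨-, hex⟩
    exact notexists3 (vne (by omega)) (vne (by omega)) (vne (by omega)) hex

lemma pairA1A2 (w : Equiv.Perm (Fin n)) (i j : Fin n) (hij : (i : ℕ) + 1 = j)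
    (hd : w j < w i) (c a : Fin n) (hc : (j : ℕ) < c) (ha : (a : ℕ) < i)
    (h1 : w c < w j) (h2 : w i < w a) : HasOccP (w * Equiv.swap i j) := by
  left
  refine ⟨![a, i, c], occ321_mk _ a i c (vlt (by omega)) (vlt (by omega)) ?_ ?_⟩
  · rw [wp_other w i j c (vne (by omega)) (vne (by omega)), wp_left]
    exact h1
  · rw [wp_left, wp_other w i j a (vne (by omega)) (vne (by omega))]
    exact hd.trans h2

lemma pairBA1 (w : Equiv.Perm (Fin n)) (i j : Fin n) (hij : (i : ℕ) + 1 = j)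
    (hd : w j < w i) (q r c : Fin n) (hq : (q : ℕ) < i) (hr : (j : ℕ) < r)
    (hB1 : w j < w r) (hB2 : w r < w q) (hB3 : w q < w i)
    (hc : (j : ℕ) < c) (h1 : w c < w j) : HasOccP (w * Equiv.swap i j) := by
  left
  refine ⟨_, transfer_occ w i j hij _ _ (occ321_mk w q j c (vlt (by omega))
    (vlt (by omega)) h1 (hB1.trans hB2)) ?_⟩
  rintro ⟨hex, -⟩
  exact notexists3 (vne (by omega)) (vne (by omega)) (vne (by omega)) hex

lemma pairBA2 (w : Equiv.Perm (Fin n)) (i j : Fin n) (hij : (i : ℕ) + 1 = j)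
    (hd : w j < w i) (q r a : Fin n) (hq : (q : ℕ) < i) (hr : (j : ℕ) < r)
    (hB1 : w j < w r) (hB2 : w r < w q) (hB3 : w q < w i)
    (ha : (a : ℕ) < i) (h2 : w i < w a) : HasOccP (w * Equiv.swap i j) := by
  left
  refine ⟨_, transfer_occ w i j hij _ _ (occ321_mk w a i r (vlt (by omega))
    (vlt (by omega)) (hB2.trans hB3) h2) ?_⟩
  rintro ⟨-, hex⟩
  exact notexists3 (vne (by omega)) (vne (by omega)) (vne (by omega)) hex

lemma pairBB1 (w : Equiv.Perm (Fin n)) (i j : Fin n) (hij : (i : ℕ) + 1 = j)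
    (hd : w j < w i) (q r q' r' : Fin n) (hq : (q : ℕ) < i) (hr : (j : ℕ) < r)
    (hq' : (q' : ℕ) < i) (hr' : (j : ℕ) < r')
    (hB1 : w j < w r) (hB2 : w r < w q) (hB3 : w q < w i)
    (hB1' : w j < w r') (hB2' : w r' < w q') (hB3' : w q' < w i)
    (hlt : (q : ℕ) < (q' : ℕ)) : HasOccP (w * Equiv.swap i j) := by
  rcases lt_trichotomy (w q) (w q') with hv | hv | hv
  · right
    refine ⟨_, transfer_occ w i j hij _ _ (occ3412_mk w q q' j r (vlt (by omega))
      (vlt (by omega)) (vlt (by omega)) hB1 hB2 hv) ?_⟩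
    rintro ⟨hex, -⟩
    exact notexists4 (vne (by omega)) (vne (by omega)) (vne (by omega)) (vne (by omega)) hex
  · exact absurd (w.injective hv) (vne (by omega))
  · left
    refine ⟨_, transfer_occ w i j hij _ _ (occ321_mk w q q' j (vlt (by omega))
      (vlt (by omega)) (hB1'.trans hB2') hv) ?_⟩
    rintro ⟨hex, -⟩
    exact notexists3 (vne (by omega)) (vne (by omega)) (vne (by omega)) hex

lemma pairBB2 (w : Equiv.Perm (Fin n)) (i j : Fin n) (hij : (i : ℕ) + 1 = j)
    (hd : w j < w i) (q r r' : Fin n) (hq : (q : ℕ) < i) (hr : (j : ℕ) < r)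
    (hr' : (j : ℕ) < r')
    (hB1 : w j < w r) (hB2 : w r < w q) (hB3 : w q < w i)
    (hB1' : w j < w r') (hB2' : w r' < w q)
    (hlt : (r : ℕ) < (r' : ℕ)) : HasOccP (w * Equiv.swap i j) := by
  rcases lt_trichotomy (w r) (w r') with hv | hv | hv
  · right
    refine ⟨_, transfer_occ w i j hij _ _ (occ3412_mk w q i r r' (vlt (by omega))
      (vlt (by omega)) (vlt (by omega)) hv hB2' hB3) ?_⟩
    rintro ⟨-, hex⟩
    exact notexists4 (vne (by omega)) (vne (by omega)) (vne (by omega)) (vne (by omega)) hex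
  · exact absurd (w.injective hv) (vne (by omega))
  · left
    refine ⟨_, transfer_occ w i j hij _ _ (occ321_mk w i r r' (vlt (by omega))
      (vlt (by omega)) hv (hB2.trans hB3)) ?_⟩
    rintro ⟨-, hex⟩
    exact notexists3 (vne (by omega)) (vne (by omega)) (vne (by omega)) hex

def NoOcc (w : Equiv.Perm (Fin n)) : Prop :=
  (∀ t : Fin 3 → Fin n, ¬ IsPatternOcc w pattern321 t) ∧
  (∀ t : Fin 4 → Fin n, ¬ IsPatternOcc w pattern3412 t)

def OneOcc (w : Equiv.Perm (Fin n)) : Prop :=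
  ((∃! t : Fin 3 → Fin n, IsPatternOcc w pattern321 t) ∧
    ∀ t : Fin 4 → Fin n, ¬ IsPatternOcc w pattern3412 t) ∨
  ((∀ t : Fin 3 → Fin n, ¬ IsPatternOcc w pattern321 t) ∧
    (∃! t : Fin 4 → Fin n, IsPatternOcc w pattern3412 t))

lemma noOcc_one : NoOcc (1 : Equiv.Perm (Fin n)) := by
  constructor
  · intro t ht
    rw [isOcc321_iff] at ht
    obtain ⟨h01, h12, v21, v10⟩ := ht
    simp only [Equiv.Perm.one_apply] at v21
    exact absurd v21 (asymm h12)
  · intro t ht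
    rw [isOcc3412_iff] at ht
    obtain ⟨h01, h12, h23, v23, v30, v01⟩ := ht
    simp only [Equiv.Perm.one_apply] at v30
    exact absurd v30 (asymm ((h01.trans h12).trans h23))

lemma hasOccP_false {u : Equiv.Perm (Fin n)} (h : HasOccP u) (h0 : NoOcc u) : False := by
  rcases h with ⟨t, ht⟩ | ⟨t, ht⟩
  · exact h0.1 t ht
  · exact h0.2 t ht

lemma transfer_back {k : ℕ} (w : Equiv.Perm (Fin n)) (i j : Fin n) (hij : (i : ℕ) + 1 = j)
    (p : Equiv.Perm (Fin k)) (t : Fin k → Fin n)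
    (h : IsPatternOcc (w * Equiv.swap i j) p t)
    (hnb : ¬((∃ a, t a = i) ∧ (∃ b, t b = j))) :
    IsPatternOcc w p (fun a => Equiv.swap i j (t a)) := by
  have := transfer_occ (w * Equiv.swap i j) i j hij p t h hnb
  rwa [mul_swap_cancel] at this

lemma notboth_swap {k : ℕ} (i j : Fin n) (t : Fin k → Fin n)
    (h : ¬((∃ a, t a = i) ∧ (∃ b, t b = j))) :
    ¬((∃ a, Equiv.swap i j (t a) = i) ∧ (∃ b, Equiv.swap i j (t b) = j)) := by
  rintro ⟨⟨a, ha⟩, ⟨b, hb⟩⟩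
  apply h
  constructor
  · refine ⟨b, ?_⟩
    have := congrArg (Equiv.swap i j) hb
    rwa [Equiv.swap_apply_self, Equiv.swap_apply_right] at this
  · refine ⟨a, ?_⟩
    have := congrArg (Equiv.swap i j) ha
    rwa [Equiv.swap_apply_self, Equiv.swap_apply_left] at this

lemma swap_comp_self {k : ℕ} (i j : Fin n) (t : Fin k → Fin n) :
    (fun a => Equiv.swap i j (Equiv.swap i j (t a))) = t := by
  funext a
  rw [Equiv.swap_apply_self]

lemma eq3 {α : Type*} (t t' : Fin 3 → α) (h0 : t 0 = t' 0) (h1 : t 1 = t' 1)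
    (h2 : t 2 = t' 2) : t = t' := by
  funext x
  fin_cases x
  · exact h0
  · exact h1
  · exact h2

lemma eq4 {α : Type*} (t t' : Fin 4 → α) (h0 : t 0 = t' 0) (h1 : t 1 = t' 1)
    (h2 : t 2 = t' 2) (h3 : t 3 = t' 3) : t = t' := by
  funext x
  fin_cases x
  · exact h0
  · exact h1
  · exact h2
  · exact h3

lemma shapeA (w : Equiv.Perm (Fin n)) (i j : Fin n) (hij : (i : ℕ) + 1 = j)
    (t : Fin 3 → Fin n) (h : IsPatternOcc w pattern321 t)
    (hi : ∃ a, t a = i) (hj : ∃ a, t a = j) :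
    (t 0 = i ∧ t 1 = j ∧ (j : ℕ) < t 2 ∧ w (t 2) < w j) ∨
    (t 1 = i ∧ t 2 = j ∧ (t 0 : ℕ) < i ∧ w i < w (t 0)) := by
  rcases shape321 w i j hij t h hi hj with ⟨e0, e1⟩ | ⟨e1, e2⟩ <;>
    rw [isOcc321_iff] at h <;> obtain ⟨h01, h12, v21, v10⟩ := h
  · left
    have he1 := congrArg Fin.val e1
    have h12' := Fin.lt_def.mp h12
    rw [e1] at v21
    exact ⟨e0, e1, by omega, v21⟩
  · right
    have he1 := congrArg Fin.val e1
    have h01' := Fin.lt_def.mp h01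
    rw [e1] at v10
    exact ⟨e1, e2, by omega, v10⟩

lemma shapeB (w : Equiv.Perm (Fin n)) (i j : Fin n) (hij : (i : ℕ) + 1 = j)
    (hd : w j < w i) (t : Fin 4 → Fin n) (h : IsPatternOcc w pattern3412 t)
    (hi : ∃ a, t a = i) (hj : ∃ a, t a = j) :
    t 1 = i ∧ t 2 = j ∧ (t 0 : ℕ) < i ∧ (j : ℕ) < t 3 ∧
      w j < w (t 3) ∧ w (t 3) < w (t 0) ∧ w (t 0) < w i := by
  obtain ⟨e1, e2⟩ := shape3412 w i j hij hd t h hi hj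
  rw [isOcc3412_iff] at h
  obtain ⟨h01, h12, h23, v23, v30, v01⟩ := h
  have he1 := congrArg Fin.val e1
  have he2 := congrArg Fin.val e2
  have h01' := Fin.lt_def.mp h01
  have h23' := Fin.lt_def.mp h23
  rw [e2] at v23
  rw [e1] at v01
  exact ⟨e1, e2, by omega, by omega, v23, v30, v01⟩

lemma occ321_unique_both (w : Equiv.Perm (Fin n)) (i j : Fin n) (hij : (i : ℕ) + 1 = j)
    (hd : w j < w i) (hN0' : NoOcc (w * Equiv.swap i j))
    (t t' : Fin 3 → Fin n) (h : IsPatternOcc w pattern321 t)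
    (h' : IsPatternOcc w pattern321 t')
    (hb1 : ∃ a, t a = i) (hb2 : ∃ a, t a = j)
    (hb1' : ∃ a, t' a = i) (hb2' : ∃ a, t' a = j) : t = t' := by
  rcases shapeA w i j hij t h hb1 hb2 with ⟨e0, e1, hc, hv⟩ | ⟨e1, e2, ha, hv⟩ <;>
    rcases shapeA w i j hij t' h' hb1' hb2' with ⟨f0, f1, hc', hv'⟩ | ⟨f1, f2, ha', hv'⟩
  · -- A1, A1
    rcases lt_trichotomy ((t 2 : Fin n) : ℕ) ((t' 2 : Fin n) : ℕ) with hcc | hcc | hcc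
    · exact absurd (pairA1A1 w i j hij hd (t 2) (t' 2) hc hc' hcc hv hv')
        (fun hP => hasOccP_false hP hN0')
    · exact eq3 t t' (by rw [e0, f0]) (by rw [e1, f1]) (Fin.ext hcc)
    · exact absurd (pairA1A1 w i j hij hd (t' 2) (t 2) hc' hc hcc hv' hv)
        (fun hP => hasOccP_false hP hN0')
  · -- A1, A2
    exact absurd (pairA1A2 w i j hij hd (t 2) (t' 0) hc ha' hv hv')
      (fun hP => hasOccP_false hP hN0')
  · -- A2, A1
    exact absurd (pairA1A2 w i j hij hd (t' 2) (t 0) hc' ha hv' hv)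
      (fun hP => hasOccP_false hP hN0')
  · -- A2, A2
    rcases lt_trichotomy ((t 0 : Fin n) : ℕ) ((t' 0 : Fin n) : ℕ) with hcc | hcc | hcc
    · exact absurd (pairA2A2 w i j hij hd (t 0) (t' 0) ha ha' hcc hv hv')
        (fun hP => hasOccP_false hP hN0')
    · exact eq3 t t' (Fin.ext hcc) (by rw [e1, f1]) (by rw [e2, f2])
    · exact absurd (pairA2A2 w i j hij hd (t' 0) (t 0) ha' ha hcc hv' hv)
        (fun hP => hasOccP_false hP hN0')

lemma occ3412_unique_both (w : Equiv.Perm (Fin n)) (i j : Fin n) (hij : (i : ℕ) + 1 = j)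
    (hd : w j < w i) (hN0' : NoOcc (w * Equiv.swap i j))
    (t t' : Fin 4 → Fin n) (h : IsPatternOcc w pattern3412 t)
    (h' : IsPatternOcc w pattern3412 t')
    (hb1 : ∃ a, t a = i) (hb2 : ∃ a, t a = j)
    (hb1' : ∃ a, t' a = i) (hb2' : ∃ a, t' a = j) : t = t' := by
  obtain ⟨e1, e2, hq, hr, hB1, hB2, hB3⟩ := shapeB w i j hij hd t h hb1 hb2
  obtain ⟨f1, f2, hq', hr', hB1', hB2', hB3'⟩ := shapeB w i j hij hd t' h' hb1' hb2'
  rcases lt_trichotomy ((t 0 : Fin n) : ℕ) ((t' 0 : Fin n) : ℕ) with hcc | hcc | hcc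
  · exact absurd (pairBB1 w i j hij hd (t 0) (t 3) (t' 0) (t' 3) hq hr hq' hr'
      hB1 hB2 hB3 hB1' hB2' hB3' hcc) (fun hP => hasOccP_false hP hN0')
  · have h00 : t 0 = t' 0 := Fin.ext hcc
    rcases lt_trichotomy ((t 3 : Fin n) : ℕ) ((t' 3 : Fin n) : ℕ) with hdd | hdd | hdd
    · refine absurd (pairBB2 w i j hij hd (t 0) (t 3) (t' 3) hq hr hr'
        hB1 hB2 hB3 hB1' ?_ hdd) (fun hP => hasOccP_false hP hN0')
      rw [h00]; exact hB2'
    · exact eq4 t t' h00 (by rw [e1, f1]) (by rw [e2, f2]) (Fin.ext hdd)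
    · refine absurd (pairBB2 w i j hij hd (t 0) (t' 3) (t 3) hq hr' hr
        hB1' ?_ hB3 hB1 hB2 hdd) (fun hP => hasOccP_false hP hN0')
      rw [← h00] at hB2'
      exact hB2'
  · exact absurd (pairBB1 w i j hij hd (t' 0) (t' 3) (t 0) (t 3) hq' hr' hq hr
      hB1' hB2' hB3' hB1 hB2 hB3 hcc) (fun hP => hasOccP_false hP hN0')

lemma occ_mixed_both_false (w : Equiv.Perm (Fin n)) (i j : Fin n) (hij : (i : ℕ) + 1 = j)
    (hd : w j < w i) (hN0' : NoOcc (w * Equiv.swap i j))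
    (t : Fin 3 → Fin n) (q : Fin 4 → Fin n)
    (h : IsPatternOcc w pattern321 t) (h' : IsPatternOcc w pattern3412 q)
    (hb1 : ∃ a, t a = i) (hb2 : ∃ a, t a = j)
    (hb1' : ∃ a, q a = i) (hb2' : ∃ a, q a = j) : False := by
  obtain ⟨e1, e2, hq0, hr, hB1, hB2, hB3⟩ := shapeB w i j hij hd q h' hb1' hb2'
  rcases shapeA w i j hij t h hb1 hb2 with ⟨f0, f1, hc, hv⟩ | ⟨f1, f2, ha, hv⟩
  · exact hasOccP_false (pairBA1 w i j hij hd (q 0) (q 3) (t 2) hq0 hr hB1 hB2 hB3 hc hv) hN0'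
  · exact hasOccP_false (pairBA2 w i j hij hd (q 0) (q 3) (t 0) hq0 hr hB1 hB2 hB3 ha hv) hN0'

lemma boolean_of_noOcc (w : Equiv.Perm (Fin n)) (h : NoOcc w) :
    invNum w = (ESet w).ncard := by
  suffices H : ∀ N (w : Equiv.Perm (Fin n)), invNum w ≤ N → NoOcc w →
      invNum w = (ESet w).ncard by exact H (invNum w) w le_rfl h
  intro N
  induction N with
  | zero =>
    intro w hw _
    have h1 := invNum_eq_zero_iff.mp (Nat.le_zero.mp hw)
    subst h1
    rw [invNum_one, ESet_one, Set.ncard_empty]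
  | succ N IH =>
    intro w hw hN0
    by_cases h0 : invNum w = 0
    · have h1 := invNum_eq_zero_iff.mp h0
      subst h1
      rw [invNum_one, ESet_one, Set.ncard_empty]
    · obtain ⟨i, j, hij, hd⟩ := exists_descent w h0
      have hstep := invNum_descent w i j hij hd
      have hN0' : NoOcc (w * Equiv.swap i j) := by
        constructor
        · intro t ht
          by_cases hb : (∃ a, t a = i) ∧ (∃ a, t a = j)
          · exact both321_wp_false w i j hij hd t ht hb.1 hb.2
          · exact hN0.1 _ (transfer_back w i j hij pattern321 t ht hb)
        · intro t ht
          by_cases hb : (∃ a, t a = i) ∧ (∃ a, t a = j)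
          · obtain ⟨t1, t2, h1, h2, -⟩ := both3412_wp_two w i j hij hd t ht hb.1 hb.2
            exact hN0.1 _ h1
          · exact hN0.2 _ (transfer_back w i j hij pattern3412 t ht hb)
      have hIH := IH _ (by omega) hN0'
      have hjE : (j : ℕ) ∉ ESet (w * Equiv.swap i j) := by
        intro hc
        rcases crossing_to_occ w i j hij hd hc with ⟨t, ht, -, -⟩ | ⟨t, ht, -, -⟩
        · exact hN0.1 t ht
        · exact hN0.2 t ht
      have hE := ncard_ESet_descent_notmem w i j hij hd hjE
      omega

lemma noOcc_of_boolean (w : Equiv.Perm (Fin n)) (h : invNum w = (ESet w).ncard) :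
    NoOcc w := by
  suffices H : ∀ N (w : Equiv.Perm (Fin n)), invNum w ≤ N →
      invNum w = (ESet w).ncard → NoOcc w by exact H (invNum w) w le_rfl h
  intro N
  induction N with
  | zero =>
    intro w hw _
    have h1 := invNum_eq_zero_iff.mp (Nat.le_zero.mp hw)
    subst h1
    exact noOcc_one
  | succ N IH =>
    intro w hw heq
    by_cases h0 : invNum w = 0
    · have h1 := invNum_eq_zero_iff.mp h0
      subst h1
      exact noOcc_one
    · obtain ⟨i, j, hij, hd⟩ := exists_descent w h0
      have hstep := invNum_descent w i j hij hd
      have hge' := ncard_ESet_le (w * Equiv.swap i j)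
      have hjE : (j : ℕ) ∉ ESet (w * Equiv.swap i j) := by
        intro hc
        have hE := ncard_ESet_descent_mem w i j hij hd hc
        omega
      have hE := ncard_ESet_descent_notmem w i j hij hd hjE
      have hN0' := IH (w * Equiv.swap i j) (by omega) (by omega)
      constructor
      · intro t ht
        by_cases hb : (∃ a, t a = i) ∧ (∃ a, t a = j)
        · exact hjE (both321_crossing w i j hij t ht hb.1 hb.2)
        · exact hN0'.1 _ (transfer_occ w i j hij pattern321 t ht hb)
      · intro t ht
        by_cases hb : (∃ a, t a = i) ∧ (∃ a, t a = j)
        · exact hjE (both3412_crossing w i j hij hd t ht hb.1 hb.2)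
        · exact hN0'.2 _ (transfer_occ w i j hij pattern3412 t ht hb)

lemma oneOcc_of_D1 (w : Equiv.Perm (Fin n)) (h : invNum w = (ESet w).ncard + 1) :
    OneOcc w := by
  suffices H : ∀ N (w : Equiv.Perm (Fin n)), invNum w ≤ N →
      invNum w = (ESet w).ncard + 1 → OneOcc w by exact H (invNum w) w le_rfl h
  intro N
  induction N with
  | zero =>
    intro w hw heq
    exfalso
    have h1 := invNum_eq_zero_iff.mp (Nat.le_zero.mp hw)
    subst h1
    rw [invNum_one, ESet_one, Set.ncard_empty] at heq
    omega
  | succ N IH =>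
    intro w hw heq
    by_cases h0 : invNum w = 0
    · exfalso
      have h1 := invNum_eq_zero_iff.mp h0
      subst h1
      rw [invNum_one, ESet_one, Set.ncard_empty] at heq
      omega
    obtain ⟨i, j, hij, hd⟩ := exists_descent w h0
    have hstep := invNum_descent w i j hij hd
    by_cases hjE : (j : ℕ) ∈ ESet (w * Equiv.swap i j)
    · have hE := ncard_ESet_descent_mem w i j hij hd hjE
      have hN0' : NoOcc (w * Equiv.swap i j) := noOcc_of_boolean _ (by omega)
      have hall321 : ∀ t, IsPatternOcc w pattern321 t →
          (∃ a, t a = i) ∧ (∃ a, t a = j) := by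
        intro t ht
        by_contra hb
        exact hN0'.1 _ (transfer_occ w i j hij pattern321 t ht hb)
      have hall3412 : ∀ t, IsPatternOcc w pattern3412 t →
          (∃ a, t a = i) ∧ (∃ a, t a = j) := by
        intro t ht
        by_contra hb
        exact hN0'.2 _ (transfer_occ w i j hij pattern3412 t ht hb)
      rcases crossing_to_occ w i j hij hd hjE with ⟨t0, ht0, hti, htj⟩ | ⟨q0, hq0, hqi, hqj⟩
      · left
        refine ⟨⟨t0, ht0, ?_⟩, ?_⟩
        · intro t' ht'
          exact occ321_unique_both w i j hij hd hN0' t' t0 ht' ht0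
            (hall321 t' ht').1 (hall321 t' ht').2 hti htj
        · intro q hq
          exact occ_mixed_both_false w i j hij hd hN0' t0 q ht0 hq hti htj
            (hall3412 q hq).1 (hall3412 q hq).2
      · right
        refine ⟨?_, ⟨q0, hq0, ?_⟩⟩
        · intro t ht
          exact occ_mixed_both_false w i j hij hd hN0' t q0 ht hq0
            (hall321 t ht).1 (hall321 t ht).2 hqi hqj
        · intro q' hq'
          exact occ3412_unique_both w i j hij hd hN0' q' q0 hq' hq0
            (hall3412 q' hq').1 (hall3412 q' hq').2 hqi hqj
    · have hE := ncard_ESet_descent_notmem w i j hij hd hjE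
      have hOne' := IH (w * Equiv.swap i j) (by omega) (by omega)
      have hnb321 : ∀ t, IsPatternOcc w pattern321 t →
          ¬((∃ a, t a = i) ∧ (∃ a, t a = j)) := by
        intro t ht hb
        exact hjE (both321_crossing w i j hij t ht hb.1 hb.2)
      have hnb3412 : ∀ t, IsPatternOcc w pattern3412 t →
          ¬((∃ a, t a = i) ∧ (∃ a, t a = j)) := by
        intro t ht hb
        exact hjE (both3412_crossing w i j hij hd t ht hb.1 hb.2)
      have hnb321' : ∀ t, IsPatternOcc (w * Equiv.swap i j) pattern321 t →
          ¬((∃ a, t a = i) ∧ (∃ a, t a = j)) := by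
        intro t ht hb
        exact both321_wp_false w i j hij hd t ht hb.1 hb.2
      have hnb3412' : ∀ t, IsPatternOcc (w * Equiv.swap i j) pattern3412 t →
          ¬((∃ a, t a = i) ∧ (∃ a, t a = j)) := by
        intro t ht hb
        exact hjE (both3412_wp_crossing w i j hij hd t ht hb.1 hb.2)
      rcases hOne' with ⟨⟨t0, ht0, huniq⟩, hno4⟩ | ⟨hno3, ⟨q0, hq0, huniq⟩⟩
      · left
        constructor
        · refine ⟨fun a => Equiv.swap i j (t0 a),
            transfer_back w i j hij pattern321 t0 ht0 (hnb321' t0 ht0), ?_⟩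
          intro t' ht'
          have htr := transfer_occ w i j hij pattern321 t' ht' (hnb321 t' ht')
          have heqq := huniq _ htr
          funext a
          have hpt := congrFun heqq a
          rw [← hpt, Equiv.swap_apply_self]
        · intro q hq
          exact hno4 _ (transfer_occ w i j hij pattern3412 q hq (hnb3412 q hq))
      · right
        constructor
        · intro t ht
          exact hno3 _ (transfer_occ w i j hij pattern321 t ht (hnb321 t ht))
        · refine ⟨fun a => Equiv.swap i j (q0 a),
            transfer_back w i j hij pattern3412 q0 hq0 (hnb3412' q0 hq0), ?_⟩
          intro q' hq'
          have htr := transfer_occ w i j hij pattern3412 q' hq' (hnb3412 q' hq')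
          have heqq := huniq _ htr
          funext a
          have hpt := congrFun heqq a
          rw [← hpt, Equiv.swap_apply_self]

lemma D1_of_oneOcc (w : Equiv.Perm (Fin n)) (h : OneOcc w) :
    invNum w = (ESet w).ncard + 1 := by
  suffices H : ∀ N (w : Equiv.Perm (Fin n)), invNum w ≤ N → OneOcc w →
      invNum w = (ESet w).ncard + 1 by exact H (invNum w) w le_rfl h
  intro N
  induction N with
  | zero =>
    intro w hw hOne
    exfalso
    have h1 := invNum_eq_zero_iff.mp (Nat.le_zero.mp hw)
    subst h1
    rcases hOne with ⟨⟨t, ht, -⟩, -⟩ | ⟨-, ⟨q, hq, -⟩⟩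
    · exact noOcc_one.1 t ht
    · exact noOcc_one.2 q hq
  | succ N IH =>
    intro w hw hOne
    by_cases h0 : invNum w = 0
    · exfalso
      have h1 := invNum_eq_zero_iff.mp h0
      subst h1
      rcases hOne with ⟨⟨t, ht, -⟩, -⟩ | ⟨-, ⟨q, hq, -⟩⟩
      · exact noOcc_one.1 t ht
      · exact noOcc_one.2 q hq
    obtain ⟨i, j, hij, hd⟩ := exists_descent w h0
    have hstep := invNum_descent w i j hij hd
    have hu321 : ∀ t t', IsPatternOcc w pattern321 t → IsPatternOcc w pattern321 t' →
        t = t' := by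
      intro t t' ht ht'
      rcases hOne with ⟨⟨t0, -, huniq⟩, -⟩ | ⟨hno3, -⟩
      · rw [huniq t ht, huniq t' ht']
      · exact absurd ht (hno3 t)
    have hu3412 : ∀ q q', IsPatternOcc w pattern3412 q → IsPatternOcc w pattern3412 q' →
        q = q' := by
      intro q q' hq hq'
      rcases hOne with ⟨-, hno4⟩ | ⟨-, ⟨q0, -, huniq⟩⟩
      · exact absurd hq (hno4 q)
      · rw [huniq q hq, huniq q' hq']
    have hmix : ∀ (t : Fin 3 → Fin n) (q : Fin 4 → Fin n),
        IsPatternOcc w pattern321 t → IsPatternOcc w pattern3412 q → False := by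
      intro t q ht hq
      rcases hOne with ⟨-, hno4⟩ | ⟨hno3, -⟩
      · exact hno4 q hq
      · exact hno3 t ht
    by_cases hjE : (j : ℕ) ∈ ESet (w * Equiv.swap i j)
    · have hN0' : NoOcc (w * Equiv.swap i j) := by
        rcases crossing_to_occ w i j hij hd hjE with ⟨t0, ht0, hti, htj⟩ | ⟨q0, hq0, hqi, hqj⟩
        · constructor
          · intro t' ht'
            by_cases hb : (∃ a, t' a = i) ∧ (∃ a, t' a = j)
            · exact both321_wp_false w i j hij hd t' ht' hb.1 hb.2
            · have hback := transfer_back w i j hij pattern321 t' ht' hb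
              have heqq := hu321 _ t0 hback ht0
              have hnbs := notboth_swap i j t' hb
              obtain ⟨a1, ha1⟩ := hti
              obtain ⟨a2, ha2⟩ := htj
              exact hnbs ⟨⟨a1, (congrFun heqq a1).trans ha1⟩,
                ⟨a2, (congrFun heqq a2).trans ha2⟩⟩
          · intro q' hq'
            by_cases hb : (∃ a, q' a = i) ∧ (∃ a, q' a = j)
            · obtain ⟨t1, t2, h1, h2, hne⟩ := both3412_wp_two w i j hij hd q' hq' hb.1 hb.2
              exact hne (hu321 t1 t2 h1 h2)
            · exact hmix t0 _ ht0 (transfer_back w i j hij pattern3412 q' hq' hb)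
        · constructor
          · intro t' ht'
            by_cases hb : (∃ a, t' a = i) ∧ (∃ a, t' a = j)
            · exact both321_wp_false w i j hij hd t' ht' hb.1 hb.2
            · exact hmix _ q0 (transfer_back w i j hij pattern321 t' ht' hb) hq0
          · intro q' hq'
            by_cases hb : (∃ a, q' a = i) ∧ (∃ a, q' a = j)
            · obtain ⟨t1, t2, h1, h2, hne⟩ := both3412_wp_two w i j hij hd q' hq' hb.1 hb.2
              exact hne (hu321 t1 t2 h1 h2)
            · have hback := transfer_back w i j hij pattern3412 q' hq' hb
              have heqq := hu3412 _ q0 hback hq0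
              have hnbs := notboth_swap i j q' hb
              obtain ⟨a1, ha1⟩ := hqi
              obtain ⟨a2, ha2⟩ := hqj
              exact hnbs ⟨⟨a1, (congrFun heqq a1).trans ha1⟩,
                ⟨a2, (congrFun heqq a2).trans ha2⟩⟩
      have hbool := boolean_of_noOcc _ hN0'
      have hE := ncard_ESet_descent_mem w i j hij hd hjE
      omega
    · have hE := ncard_ESet_descent_notmem w i j hij hd hjE
      have hnb321 : ∀ t, IsPatternOcc w pattern321 t →
          ¬((∃ a, t a = i) ∧ (∃ a, t a = j)) := by
        intro t ht hb
        exact hjE (both321_crossing w i j hij t ht hb.1 hb.2)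
      have hnb3412 : ∀ t, IsPatternOcc w pattern3412 t →
          ¬((∃ a, t a = i) ∧ (∃ a, t a = j)) := by
        intro t ht hb
        exact hjE (both3412_crossing w i j hij hd t ht hb.1 hb.2)
      have hnb321' : ∀ t, IsPatternOcc (w * Equiv.swap i j) pattern321 t →
          ¬((∃ a, t a = i) ∧ (∃ a, t a = j)) := by
        intro t ht hb
        exact both321_wp_false w i j hij hd t ht hb.1 hb.2
      have hnb3412' : ∀ t, IsPatternOcc (w * Equiv.swap i j) pattern3412 t →
          ¬((∃ a, t a = i) ∧ (∃ a, t a = j)) := by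
        intro t ht hb
        exact hjE (both3412_wp_crossing w i j hij hd t ht hb.1 hb.2)
      have hOne' : OneOcc (w * Equiv.swap i j) := by
        rcases hOne with ⟨⟨t0, ht0, huniq⟩, hno4⟩ | ⟨hno3, ⟨q0, hq0, huniq⟩⟩
        · left
          constructor
          · refine ⟨fun a => Equiv.swap i j (t0 a),
              transfer_occ w i j hij pattern321 t0 ht0 (hnb321 t0 ht0), ?_⟩
            intro t' ht'
            have hback := transfer_back w i j hij pattern321 t' ht' (hnb321' t' ht')
            have heqq := huniq _ hback
            funext a
            have hpt := congrFun heqq a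
            rw [← hpt, Equiv.swap_apply_self]
          · intro q' hq'
            exact hno4 _ (transfer_back w i j hij pattern3412 q' hq' (hnb3412' q' hq'))
        · right
          constructor
          · intro t' ht'
            exact hno3 _ (transfer_back w i j hij pattern321 t' ht' (hnb321' t' ht'))
          · refine ⟨fun a => Equiv.swap i j (q0 a),
              transfer_occ w i j hij pattern3412 q0 hq0 (hnb3412 q0 hq0), ?_⟩
            intro q' hq'
            have hback := transfer_back w i j hij pattern3412 q' hq' (hnb3412' q' hq')
            have heqq := huniq _ hback
            funext a
            have hpt := congrFun heqq a
            rw [← hpt, Equiv.swap_apply_self]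
      have hIH := IH _ (by omega) hOne'
      omega

lemma counting (w : Equiv.Perm (Fin n)) :
    numOcc w pattern321 + numOcc w pattern3412 = 1 ↔ OneOcc w := by
  have hfin3 : {t : Fin 3 → Fin n | IsPatternOcc w pattern321 t}.Finite := Set.toFinite _
  have hfin4 : {t : Fin 4 → Fin n | IsPatternOcc w pattern3412 t}.Finite := Set.toFinite _
  unfold numOcc
  constructor
  · intro h
    have hsplit : ({t : Fin 3 → Fin n | IsPatternOcc w pattern321 t}.ncard = 1 ∧
        {t : Fin 4 → Fin n | IsPatternOcc w pattern3412 t}.ncard = 0) ∨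
        ({t : Fin 3 → Fin n | IsPatternOcc w pattern321 t}.ncard = 0 ∧
        {t : Fin 4 → Fin n | IsPatternOcc w pattern3412 t}.ncard = 1) := by omega
    rcases hsplit with ⟨h1, h2⟩ | ⟨h1, h2⟩
    · left
      constructor
      · obtain ⟨t0, hset⟩ := Set.ncard_eq_one.mp h1
        refine ⟨t0, ?_, ?_⟩
        · have : t0 ∈ {t : Fin 3 → Fin n | IsPatternOcc w pattern321 t} := by
            rw [hset]; exact Set.mem_singleton _
          exact this
        · intro t' ht'
          have : t' ∈ {t : Fin 3 → Fin n | IsPatternOcc w pattern321 t} := ht'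
          rw [hset] at this
          exact this
      · intro q hq
        have hemp := (Set.ncard_eq_zero hfin4).mp h2
        have : q ∈ {t : Fin 4 → Fin n | IsPatternOcc w pattern3412 t} := hq
        rw [hemp] at this
        exact this
    · right
      constructor
      · intro t ht
        have hemp := (Set.ncard_eq_zero hfin3).mp h1
        have : t ∈ {t : Fin 3 → Fin n | IsPatternOcc w pattern321 t} := ht
        rw [hemp] at this
        exact this
      · obtain ⟨q0, hset⟩ := Set.ncard_eq_one.mp h2
        refine ⟨q0, ?_, ?_⟩
        · have : q0 ∈ {t : Fin 4 → Fin n | IsPatternOcc w pattern3412 t} := by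
            rw [hset]; exact Set.mem_singleton _
          exact this
        · intro q' hq'
          have : q' ∈ {t : Fin 4 → Fin n | IsPatternOcc w pattern3412 t} := hq'
          rw [hset] at this
          exact this
  · intro h
    rcases h with ⟨⟨t0, ht0, huniq⟩, hno4⟩ | ⟨hno3, ⟨q0, hq0, huniq⟩⟩
    · have h1 : {t : Fin 3 → Fin n | IsPatternOcc w pattern321 t} = {t0} := by
        ext t
        simp only [Set.mem_setOf_eq, Set.mem_singleton_iff]
        exact ⟨huniq t, fun e => e ▸ ht0⟩
      have h2 : {t : Fin 4 → Fin n | IsPatternOcc w pattern3412 t} = ∅ := by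
        ext q
        simp only [Set.mem_setOf_eq, Set.mem_empty_iff_false, iff_false]
        exact hno4 q
      rw [h1, h2, Set.ncard_singleton, Set.ncard_empty]
    · have h1 : {t : Fin 3 → Fin n | IsPatternOcc w pattern321 t} = ∅ := by
        ext t
        simp only [Set.mem_setOf_eq, Set.mem_empty_iff_false, iff_false]
        exact hno3 t
      have h2 : {t : Fin 4 → Fin n | IsPatternOcc w pattern3412 t} = {q0} := by
        ext q
        simp only [Set.mem_setOf_eq, Set.mem_singleton_iff]
        exact ⟨huniq q, fun e => e ▸ hq0⟩
      rw [h1, h2, Set.ncard_singleton, Set.ncard_empty]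

end Stmt3Aux

/-- `ℓ(w) = |supp(w)| + 1` iff the total number of occurrences of the
patterns 321 and 3412 in `w` equals 1. -/
theorem stmt3 (n : ℕ) (w : Equiv.Perm (Fin n)) :
    permLen n w = (permSupp n w).ncard + 1 ↔
      numOcc w pattern321 + numOcc w pattern3412 = 1 := by
  rw [Stmt3Aux.permLen_eq, Stmt3Aux.permSupp_eq, Stmt3Aux.counting]
  constructor
  · exact Stmt3Aux.oneOcc_of_D1 w
  · exact Stmt3Aux.D1_of_oneOcc w
end

section
/- Let a, b ∈ S_n and let r be such that s_r ∉ supp(a) and s_r ∉ supp(b) (i.e., the letter r appears in no reduced decomposition of a or of b). Then the following are equivalent: a ≤ b in Bruhat order; s_r a ≤ s_r b in Bruhat order; a s_r ≤ b s_r in Bruhat order. Moreover, ℓ(b) − ℓ(a) = ℓ(s_r b) − ℓ(s_r a) = ℓ(b s_r) − ℓ(a s_r). -/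
namespace SW11

open Equiv List

variable (n : ℕ)

/-- product of a word of letters -/
def wpr (ω : List ℕ) : Equiv.Perm (Fin n) := (ω.map (simpleT n)).prod

variable {n}

@[simp] lemma wpr_nil : wpr n [] = 1 := rfl

@[simp] lemma wpr_cons (i : ℕ) (ω : List ℕ) : wpr n (i :: ω) = simpleT n i * wpr n ω := by
  simp [wpr]

@[simp] lemma wpr_singleton (i : ℕ) : wpr n [i] = simpleT n i := by simp [wpr]

lemma wpr_append (ω₁ ω₂ : List ℕ) : wpr n (ω₁ ++ ω₂) = wpr n ω₁ * wpr n ω₂ := by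
  simp [wpr]

@[simp] lemma wpr_concat (ω : List ℕ) (i : ℕ) :
    wpr n (ω ++ [i]) = wpr n ω * simpleT n i := by
  simp [wpr_append, wpr]

lemma simpleT_mul_self (i : ℕ) : simpleT n i * simpleT n i = 1 := by
  unfold simpleT; split
  · exact Equiv.swap_mul_self _ _
  · exact one_mul 1

lemma simpleT_valid {i : ℕ} (h1 : 1 ≤ i) (h2 : i < n) :
    simpleT n i = Equiv.swap ⟨i - 1, by omega⟩ ⟨i, h2⟩ := by
  rw [simpleT, dif_pos ⟨h1, h2⟩]

lemma simpleT_invalid {i : ℕ} (h : ¬(1 ≤ i ∧ i < n)) : simpleT n i = 1 := by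
  rw [simpleT, dif_neg h]

lemma simpleT_inv (i : ℕ) : (simpleT n i)⁻¹ = simpleT n i :=
  inv_eq_of_mul_eq_one_right (simpleT_mul_self i)

lemma sign_simpleT {i : ℕ} (h1 : 1 ≤ i) (h2 : i < n) :
    Equiv.Perm.sign (simpleT n i) = -1 := by
  rw [simpleT_valid h1 h2]
  exact Equiv.Perm.sign_swap (by simp [Fin.ext_iff]; omega)

lemma permLen_le {ω : List ℕ} {w : Equiv.Perm (Fin n)} (h : wpr n ω = w) :
    permLen n w ≤ ω.length :=
  Nat.sInf_le ⟨ω, rfl, h⟩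

/-- every swap is a product of adjacent transpositions -/
lemma swap_word : ∀ d : ℕ, ∀ x y : Fin n, (x:ℕ) < y → (y:ℕ) - x = d →
    ∃ ω : List ℕ, (∀ i ∈ ω, 1 ≤ i ∧ i < n) ∧ wpr n ω = Equiv.swap x y := by
  intro d
  induction d using Nat.strong_induction_on with
  | _ d IH =>
    intro x y hxy hd
    rcases Nat.lt_or_ge 1 d with hd2 | hd1
    · -- d ≥ 2 : swap x y = s * swap x y' * s, s = simpleT n y, y' = y-1
      have hy1 : 1 ≤ (y:ℕ) := by omega
      have hyn : (y:ℕ) < n := y.isLt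
      set y' : Fin n := ⟨(y:ℕ) - 1, by omega⟩ with hy'
      obtain ⟨ω', hω'v, hω'⟩ := IH (d-1) (by omega) x y' (by simp [hy']; omega) (by simp [hy']; omega)
      refine ⟨(y:ℕ) :: ω' ++ [(y:ℕ)], ?_, ?_⟩
      · intro i hi
        simp at hi
        rcases hi with rfl | hi | rfl
        · exact ⟨hy1, hyn⟩
        · exact hω'v i hi
        · exact ⟨hy1, hyn⟩
      · have hs : simpleT n (y:ℕ) = Equiv.swap y' y := by
          rw [simpleT_valid hy1 hyn]
        rw [wpr_append, wpr_cons, wpr_singleton, hω', hs]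
        have h1 : Equiv.swap y' y * Equiv.swap x y' * (Equiv.swap y' y)⁻¹
            = Equiv.swap x y := by
          rw [← Equiv.swap_apply_apply]
          congr 1
          · exact Equiv.swap_apply_of_ne_of_ne (by simp [hy', Fin.ext_iff]; omega)
              (by simp [Fin.ext_iff]; omega)
          · exact Equiv.swap_apply_left _ _
        calc Equiv.swap y' y * Equiv.swap x y' * Equiv.swap y' y
            = Equiv.swap y' y * Equiv.swap x y' * (Equiv.swap y' y)⁻¹ := by
              rw [Equiv.swap_inv]
          _ = Equiv.swap x y := h1
    · -- d = 1 : adjacent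
      have hd1' : d = 1 := by omega
      have hyn : (y:ℕ) < n := y.isLt
      refine ⟨[(y:ℕ)], fun i hi => ?_, ?_⟩
      · simp at hi; omega
      · rw [wpr_singleton, simpleT_valid (by omega) hyn]
        congr 1 <;> simp [Fin.ext_iff] <;> omega

lemma exists_word (w : Equiv.Perm (Fin n)) :
    ∃ ω : List ℕ, wpr n ω = w := by
  refine Equiv.Perm.swap_induction_on w ⟨[], rfl⟩ ?_
  intro f x y hxy IH
  obtain ⟨ω, hω⟩ := IH
  rcases Ne.lt_or_gt (fun h : x = y => hxy h) with h | h
  · obtain ⟨ωs, _, hωs⟩ := swap_word ((y:ℕ) - x) x y (Fin.lt_def.mp h) rfl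
    exact ⟨ωs ++ ω, by rw [wpr_append, hωs, hω]⟩
  · obtain ⟨ωs, _, hωs⟩ := swap_word ((x:ℕ) - y) y x (Fin.lt_def.mp h) rfl
    exact ⟨ωs ++ ω, by rw [wpr_append, hωs, Equiv.swap_comm, hω]⟩

lemma exists_reduced (w : Equiv.Perm (Fin n)) : ∃ ω, IsReducedWord n ω w := by
  obtain ⟨ω, hω⟩ := exists_word w
  have hne : {l : ℕ | ∃ word : List ℕ, word.length = l ∧ (word.map (simpleT n)).prod = w}.Nonempty :=
    ⟨ω.length, ω, rfl, hω⟩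
  obtain ⟨ω', hlen, hprod⟩ := Nat.sInf_mem hne
  exact ⟨ω', hprod, hlen⟩


variable (n) in
/-- the `j`-th entry of the right inversion sequence of a word -/
def tseq (ω : List ℕ) (j : ℕ) : Equiv.Perm (Fin n) :=
  (wpr n (ω.drop (j+1)))⁻¹ * simpleT n (ω.getD j 0) * wpr n (ω.drop (j+1))

lemma tseq_cons_zero (i : ℕ) (ω : List ℕ) :
    tseq n (i :: ω) 0 = (wpr n ω)⁻¹ * simpleT n i * wpr n ω := rfl

lemma tseq_cons_succ (i : ℕ) (ω : List ℕ) (j : ℕ) :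
    tseq n (i :: ω) (j+1) = tseq n ω j := rfl

lemma erase_eq : ∀ (ω : List ℕ) (j : ℕ), j < ω.length →
    wpr n (ω.eraseIdx j) = wpr n ω * tseq n ω j := by
  intro ω
  induction ω with
  | nil => intro j hj; simp at hj
  | cons i ω IH =>
    intro j hj
    cases j with
    | zero =>
      show wpr n ω = wpr n (i :: ω) * tseq n (i :: ω) 0
      rw [tseq_cons_zero, wpr_cons]
      group
      rw [simpleT_mul_self, one_mul]
    | succ j =>
      have hj' : j < ω.length := by simpa using hj
      show wpr n (i :: ω.eraseIdx j) = wpr n (i :: ω) * tseq n (i :: ω) (j+1)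
      rw [tseq_cons_succ, wpr_cons, wpr_cons, IH j hj', mul_assoc]

lemma IsRW.wpr_eq {ω : List ℕ} {w : Equiv.Perm (Fin n)} (h : IsReducedWord n ω w) :
    wpr n ω = w := h.1

lemma IsRW.len_eq {ω : List ℕ} {w : Equiv.Perm (Fin n)} (h : IsReducedWord n ω w) :
    ω.length = permLen n w := h.2

lemma mk_IsRW {ω : List ℕ} {w : Equiv.Perm (Fin n)} (h1 : wpr n ω = w)
    (h2 : ω.length = permLen n w) : IsReducedWord n ω w := ⟨h1, h2⟩

lemma adj_order {p q u v : Fin n} (hpq : (p:ℕ)+1 = (q:ℕ)) (huv : u < v)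
    (hne : ¬(u = p ∧ v = q)) : Equiv.swap p q u < Equiv.swap p q v := by
  rw [Equiv.swap_apply_def, Equiv.swap_apply_def]
  rw [Fin.lt_def] at huv ⊢
  split_ifs <;> simp only [Fin.ext_iff, not_and] at * <;> omega

lemma order_pres : ∀ (ω : List ℕ) (a b : Fin n), a < b →
    (∀ j, j < ω.length → tseq n ω j ≠ Equiv.swap a b) → wpr n ω a < wpr n ω b := by
  intro ω
  induction ω with
  | nil => intro a b hab _; simpa using hab
  | cons i ω IH =>
    intro a b hab h
    have h0 := h 0 (by simp)
    have hrest : ∀ j, j < ω.length → tseq n ω j ≠ Equiv.swap a b := fun j hj =>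
      h (j+1) (by simp; omega)
    have IH' := IH a b hab hrest
    rw [wpr_cons]
    by_cases hv : 1 ≤ i ∧ i < n
    · have hs : simpleT n i = Equiv.swap ⟨i-1, by omega⟩ ⟨i, hv.2⟩ :=
        simpleT_valid hv.1 hv.2
      set p : Fin n := ⟨i-1, by omega⟩ with hp
      set q : Fin n := ⟨i, hv.2⟩ with hq
      set σ := wpr n ω with hσ
      rw [Equiv.Perm.mul_apply, Equiv.Perm.mul_apply, hs]
      apply adj_order (by simp [hp, hq]; omega) IH'
      rintro ⟨hap, hbq⟩
      apply h0
      rw [tseq_cons_zero, hs, ← hσ]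
      have : σ⁻¹ * Equiv.swap p q * σ = Equiv.swap (σ⁻¹ p) (σ⁻¹ q) := by
        have := Equiv.swap_apply_apply σ⁻¹ p q
        simpa using this.symm
      rw [this]
      congr 1
      · rw [← hap]; exact Equiv.symm_apply_apply σ a
      · rw [← hbq]; exact Equiv.symm_apply_apply σ b
    · rw [simpleT_invalid hv, one_mul]
      exact IH'

lemma strong_exchange_lt (ω : List ℕ) (a b : Fin n) (hab : a < b)
    (h : permLen n (wpr n ω * Equiv.swap a b) < permLen n (wpr n ω)) :
    ∃ j, j < ω.length ∧ wpr n (ω.eraseIdx j) = wpr n ω * Equiv.swap a b := by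
  by_cases hex : ∃ j, j < ω.length ∧ tseq n ω j = Equiv.swap a b
  · obtain ⟨j, hj, ht⟩ := hex
    exact ⟨j, hj, by rw [erase_eq ω j hj, ht]⟩
  · exfalso
    push_neg at hex
    have hord : wpr n ω a < wpr n ω b := order_pres ω a b hab hex
    set u := wpr n ω * Equiv.swap a b with hu'
    have hu : ¬ (u a < u b) := by
      have h1 : u a = wpr n ω b := by
        rw [hu', Equiv.Perm.mul_apply, Equiv.swap_apply_left]
      have h2 : u b = wpr n ω a := by
        rw [hu', Equiv.Perm.mul_apply, Equiv.swap_apply_right]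
      rw [h1, h2]; exact not_lt.mpr (le_of_lt hord)
    obtain ⟨ρ, hρ⟩ := exists_reduced u
    have hρ1 : wpr n ρ = u := IsRW.wpr_eq hρ
    have hρ2 : ρ.length = permLen n u := IsRW.len_eq hρ
    have hex2 : ∃ j, j < ρ.length ∧ tseq n ρ j = Equiv.swap a b := by
      by_contra hc; push_neg at hc
      exact hu (hρ1 ▸ order_pres ρ a b hab hc)
    obtain ⟨j, hj, ht⟩ := hex2
    have heq : wpr n (ρ.eraseIdx j) = wpr n ω := by
      rw [erase_eq ρ j hj, ht, hρ1, hu', mul_assoc, Equiv.swap_mul_self, mul_one]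
    have hle := permLen_le heq
    rw [List.length_eraseIdx_of_lt hj] at hle
    omega

lemma strong_exchange (ω : List ℕ) (a b : Fin n) (hab : a ≠ b)
    (h : permLen n (wpr n ω * Equiv.swap a b) < permLen n (wpr n ω)) :
    ∃ j, j < ω.length ∧ wpr n (ω.eraseIdx j) = wpr n ω * Equiv.swap a b := by
  rcases hab.lt_or_gt with hlt | hlt
  · exact strong_exchange_lt ω a b hlt h
  · rw [Equiv.swap_comm] at h ⊢
    exact strong_exchange_lt ω b a hlt h

lemma junk_delete {ω : List ℕ} {j : ℕ} (hj : j < ω.length)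
    (hjunk : ¬(1 ≤ ω.getD j 0 ∧ ω.getD j 0 < n)) :
    wpr n (ω.eraseIdx j) = wpr n ω := by
  rw [erase_eq ω j hj]
  unfold tseq
  rw [simpleT_invalid hjunk, mul_one, inv_mul_cancel, mul_one]

lemma reduced_valid {ω : List ℕ} {w : Equiv.Perm (Fin n)} (h : IsReducedWord n ω w) :
    ∀ i ∈ ω, 1 ≤ i ∧ i < n := by
  intro i hi
  by_contra hbad
  obtain ⟨j, hj, hget⟩ := List.getElem_of_mem hi
  have hgetD : ω.getD j 0 = i := by rw [List.getD_eq_getElem ω 0 hj, hget]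
  have := junk_delete hj (by rw [hgetD]; exact hbad)
  have hle := permLen_le (this.trans h.1)
  rw [List.length_eraseIdx_of_lt hj, h.2] at hle
  have : 0 < ω.length := by omega
  rw [h.2] at this
  omega

lemma sign_word : ∀ ω : List ℕ, (∀ i ∈ ω, 1 ≤ i ∧ i < n) →
    Equiv.Perm.sign (wpr n ω) = (-1) ^ ω.length := by
  intro ω
  induction ω with
  | nil => intro _; simp
  | cons i ω IH =>
    intro h
    rw [wpr_cons, map_mul, IH (fun j hj => h j (List.mem_cons_of_mem i hj)),
      sign_simpleT (h i (List.mem_cons_self (a := i) (l := ω))).1 (h i (List.mem_cons_self (a := i) (l := ω))).2]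
    rw [List.length_cons, pow_succ]
    exact mul_comm _ _

lemma sign_permLen (w : Equiv.Perm (Fin n)) :
    Equiv.Perm.sign w = (-1) ^ permLen n w := by
  obtain ⟨ω, hω⟩ := exists_reduced w
  calc Equiv.Perm.sign w = Equiv.Perm.sign (wpr n ω) := by rw [IsRW.wpr_eq hω]
    _ = (-1) ^ ω.length := sign_word ω (reduced_valid hω)
    _ = (-1) ^ permLen n w := by rw [IsRW.len_eq hω]

lemma len_mul_le (w : Equiv.Perm (Fin n)) (i : ℕ) :
    permLen n (w * simpleT n i) ≤ permLen n w + 1 := by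
  obtain ⟨ω, hω⟩ := exists_reduced w
  have : wpr n (ω ++ [i]) = w * simpleT n i := by rw [wpr_concat, IsRW.wpr_eq hω]
  have := permLen_le this
  rwa [List.length_append, List.length_singleton, IsRW.len_eq hω] at this

lemma len_le_mul (w : Equiv.Perm (Fin n)) (i : ℕ) :
    permLen n w ≤ permLen n (w * simpleT n i) + 1 := by
  have h := len_mul_le (w * simpleT n i) i
  rwa [mul_assoc, simpleT_mul_self, mul_one] at h

lemma len_mul_ne {w : Equiv.Perm (Fin n)} {i : ℕ} (h1 : 1 ≤ i) (h2 : i < n) :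
    permLen n (w * simpleT n i) ≠ permLen n w := by
  intro hEq
  have hs1 := sign_permLen w
  have hs2 := sign_permLen (w * simpleT n i)
  rw [map_mul, sign_simpleT h1 h2, hs1, hEq] at hs2
  have hcc : ((-1 : ℤˣ)) = 1 :=
    mul_left_cancel (a := ((-1 : ℤˣ)) ^ permLen n w) (by rw [mul_one]; exact hs2)
  exact absurd hcc (by decide)

lemma len_succ_or_pred {w : Equiv.Perm (Fin n)} {i : ℕ} (h1 : 1 ≤ i) (h2 : i < n) :
    permLen n (w * simpleT n i) = permLen n w + 1 ∨
    permLen n (w * simpleT n i) + 1 = permLen n w := by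
  have a1 := len_mul_le w i
  have a2 := len_le_mul w i
  have a3 := len_mul_ne (w := w) h1 h2
  omega

lemma take_ascent (ω : List ℕ)
    (h : ∀ j, j < ω.length →
      permLen n (wpr n (ω.take j)) < permLen n (wpr n (ω.take (j+1)))) :
    ∀ k, k ≤ ω.length → k ≤ permLen n (wpr n (ω.take k)) := by
  intro k
  induction k with
  | zero => intro _; omega
  | succ k IH =>
    intro hk
    have h1 := IH (by omega)
    have h2 := h k (by omega)
    omega

lemma deletion : ∀ N (ω : List ℕ), ω.length ≤ N →
    ∃ ρ, ρ.Sublist ω ∧ IsReducedWord n ρ (wpr n ω) := by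
  intro N
  induction N with
  | zero =>
    intro ω hω
    have hnil : ω = [] := List.eq_nil_of_length_eq_zero (by omega)
    subst hnil
    exact ⟨[], List.Sublist.refl _,
      mk_IsRW rfl (Nat.le_zero.mp (permLen_le (ω := ([] : List ℕ)) rfl)).symm⟩
  | succ N IH =>
    intro ω hω
    by_cases hred : ω.length ≤ permLen n (wpr n ω)
    · exact ⟨ω, List.Sublist.refl _,
        mk_IsRW rfl (le_antisymm hred (permLen_le rfl))⟩
    · push_neg at hred
      have hdesc : ∃ j, j < ω.length ∧
          ¬ permLen n (wpr n (ω.take j)) < permLen n (wpr n (ω.take (j+1))) := by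
        by_contra hc; push_neg at hc
        have := take_ascent ω hc ω.length le_rfl
        rw [List.take_length] at this; omega
      obtain ⟨j, hj, hnd⟩ := hdesc
      push_neg at hnd
      have htake : ω.take (j+1) = ω.take j ++ [ω.getD j 0] := by
        have hget : ω.getD j 0 = ω[j] := List.getD_eq_getElem ω 0 hj
        rw [List.take_succ, List.getElem?_eq_getElem hj, hget]
        rfl
      by_cases hv : 1 ≤ ω.getD j 0 ∧ ω.getD j 0 < n
      · -- valid letter, genuine descent: use exchange
        have hwt : wpr n (ω.take (j+1)) = wpr n (ω.take j) * simpleT n (ω.getD j 0) := by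
          rw [htake, wpr_concat]
        have hlt : permLen n (wpr n (ω.take (j+1))) < permLen n (wpr n (ω.take j)) := by
          rcases len_succ_or_pred (w := wpr n (ω.take j)) hv.1 hv.2 with hc | hc <;>
            rw [← hwt] at hc <;> omega
        rw [hwt, simpleT_valid hv.1 hv.2] at hlt
        obtain ⟨m, hm, hmeq⟩ := strong_exchange_lt (ω.take j) _ _
          (Fin.mk_lt_mk.mpr (by omega)) hlt
        set ω' := (ω.take j).eraseIdx m ++ ω.drop (j+1) with hω'
        have hprod : wpr n ω' = wpr n ω := by
          rw [hω', wpr_append, hmeq, ← simpleT_valid hv.1 hv.2, ← hwt,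
            ← wpr_append, List.take_append_drop]
        have hsub : ω'.Sublist ω := by
          have h1 : ((ω.take j).eraseIdx m).Sublist (ω.take j) := List.eraseIdx_sublist _ _
          have h2 : (ω.take j).Sublist (ω.take (j+1)) := by
            rw [htake]; exact List.sublist_append_left _ _
          have h3 := (h1.trans h2).append (List.Sublist.refl (ω.drop (j+1)))
          rwa [List.take_append_drop] at h3
        have hlen : ω'.length ≤ N := by
          rw [hω', List.length_append, List.length_eraseIdx_of_lt hm,
            List.length_take, List.length_drop]
          have := hm
          rw [List.length_take] at this
          omega
        obtain ⟨ρ, hρsub, hρred⟩ := IH ω' hlen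
        exact ⟨ρ, hρsub.trans hsub, hprod ▸ hρred⟩
      · -- junk letter: delete it
        have hprod : wpr n (ω.eraseIdx j) = wpr n ω := junk_delete hj hv
        have hlen : (ω.eraseIdx j).length ≤ N := by
          rw [List.length_eraseIdx_of_lt hj]; omega
        obtain ⟨ρ, hρsub, hρred⟩ := IH _ hlen
        exact ⟨ρ, hρsub.trans (List.eraseIdx_sublist _ _), hprod ▸ hρred⟩

variable (n) in
/-- one step down in the Bruhat graph -/
def bstep (u w : Equiv.Perm (Fin n)) : Prop :=
  (∃ a b : Fin n, a ≠ b ∧ u = w * Equiv.swap a b) ∧ permLen n u < permLen n w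

variable (n) in
/-- chain version of the Bruhat order -/
def chLE (v w : Equiv.Perm (Fin n)) : Prop := Relation.ReflTransGen (bstep n) v w

lemma chain_to_subword : ∀ N (w : Equiv.Perm (Fin n)), permLen n w ≤ N →
    ∀ v, chLE n v w → ∀ ω : List ℕ, wpr n ω = w →
    ∃ ρ, ρ.Sublist ω ∧ IsReducedWord n ρ v := by
  intro N
  induction N with
  | zero =>
    intro w hw v hch ω hω
    rcases Relation.ReflTransGen.cases_tail hch with heq | ⟨z, _, hz⟩
    · subst heq
      obtain ⟨ρ, h1, h2⟩ := deletion ω.length ω le_rfl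
      exact ⟨ρ, h1, hω ▸ h2⟩
    · exact absurd hz.2 (by omega)
  | succ N IH =>
    intro w hw v hch ω hω
    rcases Relation.ReflTransGen.cases_tail hch with heq | ⟨z, hvz, hz⟩
    · subst heq
      obtain ⟨ρ, h1, h2⟩ := deletion ω.length ω le_rfl
      exact ⟨ρ, h1, hω ▸ h2⟩
    · obtain ⟨⟨a, b, hab, hzw⟩, hlz⟩ := hz
      have hse : permLen n (wpr n ω * Equiv.swap a b) < permLen n (wpr n ω) := by
        rw [hω, ← hzw]; exact hlz
      obtain ⟨j, hj, hjeq⟩ := strong_exchange ω a b hab hse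
      have hz' : wpr n (ω.eraseIdx j) = z := by rw [hjeq, hω, ← hzw]
      obtain ⟨ρ, h1, h2⟩ := IH z (by omega) v hvz (ω.eraseIdx j) hz'
      exact ⟨ρ, h1.trans (List.eraseIdx_sublist _ _), h2⟩

variable (n) in
def LiftS (w : Equiv.Perm (Fin n)) : Prop :=
  ∀ (v : Equiv.Perm (Fin n)) (i : ℕ), 1 ≤ i → i < n →
    permLen n (w * simpleT n i) < permLen n w →
    permLen n (v * simpleT n i) < permLen n v →
    chLE n (v * simpleT n i) (w * simpleT n i) → chLE n v w

variable (n) in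
def CS (w : Equiv.Perm (Fin n)) : Prop :=
  ∀ (v : Equiv.Perm (Fin n)) (ρ ω : List ℕ), IsReducedWord n ρ v →
    IsReducedWord n ω w → ρ.Sublist ω → chLE n v w

lemma bstep_simpleT {w : Equiv.Perm (Fin n)} {i : ℕ} (h1 : 1 ≤ i) (h2 : i < n)
    (hlt : permLen n (w * simpleT n i) < permLen n w) :
    bstep n (w * simpleT n i) w := by
  refine ⟨⟨⟨i-1, by omega⟩, ⟨i, h2⟩, by simp [Fin.ext_iff]; omega, ?_⟩, hlt⟩
  rw [simpleT_valid h1 h2]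

lemma lift_and_C : ∀ N (w : Equiv.Perm (Fin n)), permLen n w ≤ N →
    LiftS n w ∧ CS n w := by
  intro N
  induction N using Nat.strong_induction_on with
  | _ N IHN =>
  intro w hw
  have L : LiftS n w := by
    intro v i h1 h2 hw' hv' hch
    rcases Relation.ReflTransGen.cases_tail hch with heq | ⟨z, hvz, hzstep⟩
    · have : w = v := mul_right_cancel heq
      subst this
      exact Relation.ReflTransGen.refl
    · obtain ⟨⟨a, b, hab, hz⟩, hlz⟩ := hzstep
      have hzsi : z * simpleT n i * simpleT n i = z := by
        rw [mul_assoc, simpleT_mul_self, mul_one]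
      rcases len_succ_or_pred (w := z) h1 h2 with hasc | hdesc
      · -- ascent case
        have hlw₂ : permLen n (z * simpleT n i) < permLen n w := by omega
        have hLift := (IHN (permLen n (z * simpleT n i)) (by omega) _ le_rfl).1
        have hch2 : chLE n v (z * simpleT n i) := by
          apply hLift v i h1 h2 ?_ hv' ?_
          · rw [hzsi]; omega
          · rw [hzsi]; exact hvz
        refine hch2.tail ⟨⟨simpleT n i a, simpleT n i b, ?_, ?_⟩, hlw₂⟩
        · intro hc
          exact hab ((simpleT n i).injective hc)
        · have hsw : Equiv.swap (simpleT n i a) (simpleT n i b) =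
              simpleT n i * Equiv.swap a b * (simpleT n i)⁻¹ :=
            Equiv.swap_apply_apply _ a b
          rw [hsw, simpleT_inv, hz]
          group
      · -- descent case
        obtain ⟨ωzs, hωzs⟩ := exists_reduced (z * simpleT n i)
        have hρz : IsReducedWord n (ωzs ++ [i]) z := by
          refine mk_IsRW ?_ ?_
          · rw [wpr_concat, IsRW.wpr_eq hωzs, hzsi]
          · rw [List.length_append, List.length_singleton, IsRW.len_eq hωzs]; omega
        obtain ⟨ρ', hρ'sub, hρ'red⟩ := chain_to_subword (permLen n z) z le_rfl
          (v * simpleT n i) hvz (ωzs ++ [i]) (IsRW.wpr_eq hρz)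
        rw [List.sublist_append_iff] at hρ'sub
        obtain ⟨l1, l2, heq, hl1, hl2⟩ := hρ'sub
        have hvs_len : permLen n (v * simpleT n i) + 1 = permLen n v := by
          have := len_le_mul v i; omega
        rcases List.sublist_singleton.mp hl2 with rfl | rfl
        · -- l2 = [] : good case
          rw [List.append_nil] at heq
          subst heq
          have hred'' : IsReducedWord n (ρ' ++ [i]) v := by
            refine mk_IsRW ?_ ?_
            · rw [wpr_concat, IsRW.wpr_eq hρ'red, mul_assoc, simpleT_mul_self, mul_one]
            · rw [List.length_append, List.length_singleton, IsRW.len_eq hρ'red]; omega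
          have hCz := (IHN (permLen n z) (by omega) z le_rfl).2
          have hvch : chLE n v z := hCz v (ρ' ++ [i]) (ωzs ++ [i]) hred'' hρz
            (hl1.append (List.Sublist.refl [i]))
          have st1 : bstep n z (w * simpleT n i) := ⟨⟨a, b, hab, hz⟩, hlz⟩
          have st2 : bstep n (w * simpleT n i) w := bstep_simpleT h1 h2 hw'
          exact (hvch.tail st1).tail st2
        · -- l2 = [i] : contradiction via lengths
          exfalso
          subst heq
          have hπ : wpr n l1 * simpleT n i = v * simpleT n i := by
            rw [← wpr_concat]; exact IsRW.wpr_eq hρ'red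
          have hπ' : wpr n l1 = v := mul_right_cancel hπ
          have hlev := permLen_le hπ'
          have hlen' := IsRW.len_eq hρ'red
          rw [List.length_append, List.length_singleton] at hlen'
          omega
  refine ⟨L, ?_⟩
  intro v ρ ω hρ hω hsub
  rcases List.eq_nil_or_concat ω with rfl | ⟨ω₀, i, rfl⟩
  · have hρnil : ρ = [] := List.sublist_nil.mp hsub
    subst hρnil
    have hv : v = 1 := (IsRW.wpr_eq hρ).symm
    have hw1 : w = 1 := (IsRW.wpr_eq hω).symm
    rw [hv, hw1]
    exact Relation.ReflTransGen.refl
  · rw [List.concat_eq_append] at hω hsub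
    have hvalid : 1 ≤ i ∧ i < n := reduced_valid hω i (by simp)
    obtain ⟨h1, h2⟩ := hvalid
    have hπω : wpr n (ω₀ ++ [i]) = w := IsRW.wpr_eq hω
    have hw0 : wpr n ω₀ = w * simpleT n i := by
      rw [← hπω, wpr_concat, mul_assoc, simpleT_mul_self, mul_one]
    have hlω := IsRW.len_eq hω
    rw [List.length_append, List.length_singleton] at hlω
    have hl0 : ω₀.length = permLen n (w * simpleT n i) := by
      have hb1 := permLen_le hw0
      have hb2 := len_le_mul w i
      omega
    have hred0 : IsReducedWord n ω₀ (w * simpleT n i) := ⟨hw0, hl0⟩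
    have hws : permLen n (w * simpleT n i) < permLen n w := by omega
    rw [List.sublist_append_iff] at hsub
    obtain ⟨l1, l2, heq, hl1, hl2⟩ := hsub
    rcases List.sublist_singleton.mp hl2 with rfl | rfl
    · rw [List.append_nil] at heq
      subst heq
      have hCz := (IHN (permLen n (w * simpleT n i)) (by omega) _ le_rfl).2
      have hvch : chLE n v (w * simpleT n i) := hCz v ρ ω₀ hρ hred0 hl1
      exact hvch.tail (bstep_simpleT h1 h2 hws)
    · subst heq
      have hπ : wpr n l1 * simpleT n i = v := by
        rw [← wpr_concat]; exact IsRW.wpr_eq hρ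
      have hπ' : wpr n l1 = v * simpleT n i := by
        rw [← hπ, mul_assoc, simpleT_mul_self, mul_one]
      have hlρ := IsRW.len_eq hρ
      rw [List.length_append, List.length_singleton] at hlρ
      have hlvs : l1.length = permLen n (v * simpleT n i) := by
        have hb1 := permLen_le hπ'
        have hb2 := len_le_mul v i
        omega
      have hredl1 : IsReducedWord n l1 (v * simpleT n i) := ⟨hπ', hlvs⟩
      have hvs : permLen n (v * simpleT n i) < permLen n v := by omega
      have hCz := (IHN (permLen n (w * simpleT n i)) (by omega) _ le_rfl).2
      have hvch : chLE n (v * simpleT n i) (w * simpleT n i) :=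
        hCz _ l1 ω₀ hredl1 hred0 hl1
      exact L v i h1 h2 hws hvs hvch

lemma le_to_subword {v w : Equiv.Perm (Fin n)} (hvw : bruhatLE n v w) :
    ∀ ω : List ℕ, wpr n ω = w → ∃ ρ, ρ.Sublist ω ∧ IsReducedWord n ρ v := by
  obtain ⟨ρv, ρw, hv, hw, hs⟩ := hvw
  intro ω hω
  have hch : chLE n v w := (lift_and_C (permLen n w) w le_rfl).2 v ρv ρw hv hw hs
  exact chain_to_subword (permLen n w) w le_rfl v hch ω hω

variable (n) in
def BlockP (r : ℕ) (w : Equiv.Perm (Fin n)) : Prop :=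
  ∀ x : Fin n, (x:ℕ) < r ↔ ((w x):ℕ) < r

lemma blockP_mul {r : ℕ} {u w : Equiv.Perm (Fin n)} (h1 : BlockP n r u)
    (h2 : BlockP n r w) : BlockP n r (u * w) :=
  fun x => (h2 x).trans (h1 (w x))

lemma blockP_simpleT {r i : ℕ} (hir : i ≠ r) : BlockP n r (simpleT n i) := by
  by_cases hv : 1 ≤ i ∧ i < n
  · rw [simpleT_valid hv.1 hv.2]
    intro x
    rcases eq_or_ne x ⟨i-1, by omega⟩ with rfl | hx1
    · rw [Equiv.swap_apply_left]
      show i - 1 < r ↔ i < r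
      omega
    rcases eq_or_ne x ⟨i, hv.2⟩ with rfl | hx2
    · rw [Equiv.swap_apply_right]
      show i < r ↔ i - 1 < r
      omega
    · rw [Equiv.swap_apply_of_ne_of_ne hx1 hx2]
  · rw [simpleT_invalid hv]
    intro x; rfl

lemma blockP_word {r : ℕ} : ∀ ω : List ℕ, r ∉ ω → BlockP n r (wpr n ω) := by
  intro ω
  induction ω with
  | nil => intro _ x; rfl
  | cons i ω IH =>
    intro h
    rw [wpr_cons]
    exact blockP_mul (blockP_simpleT (fun hc => h (hc ▸ List.mem_cons_self (a := i) (l := ω))))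
      (IH (fun hc => h (List.mem_cons_of_mem i hc)))

lemma not_mem_reduced {r : ℕ} {a : Equiv.Perm (Fin n)} (ha : r ∉ permSupp n a)
    {ω : List ℕ} (hω : IsReducedWord n ω a) : r ∉ ω :=
  fun hmem => ha ⟨ω, hω, hmem⟩

lemma blockP_of_not_supp {r : ℕ} {a : Equiv.Perm (Fin n)} (ha : r ∉ permSupp n a) :
    BlockP n r a := by
  obtain ⟨ω, hω⟩ := exists_reduced a
  rw [← IsRW.wpr_eq hω]
  exact blockP_word ω (not_mem_reduced ha hω)

lemma mem_of_word_left {r : ℕ} (hr : 1 ≤ r) (hrn : r < n) {a : Equiv.Perm (Fin n)}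
    (hQ : BlockP n r a) {ω : List ℕ} (hω : wpr n ω = simpleT n r * a) : r ∈ ω := by
  by_contra hmem
  have hQω := blockP_word (n := n) (r := r) ω hmem
  rw [hω] at hQω
  set x := a⁻¹ ⟨r-1, by omega⟩ with hx
  have hax : a x = ⟨r-1, by omega⟩ := Equiv.apply_symm_apply a _
  have h1 : (x:ℕ) < r := (hQ x).mpr (by rw [hax]; show r - 1 < r; omega)
  have h2 := (hQω x).mp h1
  rw [Equiv.Perm.mul_apply, hax, simpleT_valid hr hrn, Equiv.swap_apply_left] at h2
  exact absurd h2 (by show ¬ r < r; omega)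

lemma mem_of_word_right {r : ℕ} (hr : 1 ≤ r) (hrn : r < n) {a : Equiv.Perm (Fin n)}
    (hQ : BlockP n r a) {ω : List ℕ} (hω : wpr n ω = a * simpleT n r) : r ∈ ω := by
  by_contra hmem
  have hQω := blockP_word (n := n) (r := r) ω hmem
  rw [hω] at hQω
  have h1 : ((⟨r-1, by omega⟩ : Fin n) : ℕ) < r := by show r - 1 < r; omega
  have h2 := (hQω _).mp h1
  rw [Equiv.Perm.mul_apply, simpleT_valid hr hrn, Equiv.swap_apply_left] at h2
  have h3 : ¬ ((a ⟨r, hrn⟩ : Fin n) : ℕ) < r := fun hc =>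
    absurd ((hQ ⟨r, hrn⟩).mpr hc) (by show ¬ r < r; omega)
  exact h3 h2

lemma len_left_ne {r : ℕ} (hr : 1 ≤ r) (hrn : r < n) (a : Equiv.Perm (Fin n)) :
    permLen n (simpleT n r * a) ≠ permLen n a := by
  intro hEq
  have hs1 := sign_permLen (n := n) a
  have hs2 := sign_permLen (simpleT n r * a)
  rw [map_mul, sign_simpleT hr hrn, hs1, hEq] at hs2
  have hcc : ((-1 : ℤˣ)) = 1 :=
    mul_right_cancel (b := ((-1 : ℤˣ)) ^ permLen n a) (by rw [one_mul]; exact hs2)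
  exact absurd hcc (by decide)

lemma len_left_succ {r : ℕ} (hr : 1 ≤ r) (hrn : r < n) {a : Equiv.Perm (Fin n)}
    (ha : r ∉ permSupp n a) : permLen n (simpleT n r * a) = permLen n a + 1 := by
  obtain ⟨ωa, hωa⟩ := exists_reduced a
  obtain ⟨ρ, hρ⟩ := exists_reduced (simpleT n r * a)
  have hle : permLen n (simpleT n r * a) ≤ permLen n a + 1 := by
    have hword : wpr n (r :: ωa) = simpleT n r * a := by rw [wpr_cons, IsRW.wpr_eq hωa]
    have := permLen_le hword
    rw [List.length_cons, IsRW.len_eq hωa] at this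
    exact this
  have hwρ : wpr n (r :: ρ) = a := by
    rw [wpr_cons, IsRW.wpr_eq hρ, ← mul_assoc, simpleT_mul_self, one_mul]
  have hge : permLen n a ≤ permLen n (simpleT n r * a) + 1 := by
    have := permLen_le hwρ
    rw [List.length_cons, IsRW.len_eq hρ] at this
    exact this
  have hne := len_left_ne hr hrn a
  rcases (by omega : permLen n (simpleT n r * a) = permLen n a + 1 ∨
      permLen n (simpleT n r * a) + 1 = permLen n a) with h | h
  · exact h
  · exfalso
    apply ha
    refine ⟨r :: ρ, mk_IsRW hwρ ?_, List.mem_cons_self (a := r) (l := ρ)⟩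
    rw [List.length_cons, IsRW.len_eq hρ, h]

lemma len_right_succ {r : ℕ} (hr : 1 ≤ r) (hrn : r < n) {a : Equiv.Perm (Fin n)}
    (ha : r ∉ permSupp n a) : permLen n (a * simpleT n r) = permLen n a + 1 := by
  obtain ⟨ωa, hωa⟩ := exists_reduced a
  obtain ⟨ρ, hρ⟩ := exists_reduced (a * simpleT n r)
  have hle : permLen n (a * simpleT n r) ≤ permLen n a + 1 := by
    have hword : wpr n (ωa ++ [r]) = a * simpleT n r := by
      rw [wpr_concat, IsRW.wpr_eq hωa]
    have := permLen_le hword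
    rw [List.length_append, List.length_singleton, IsRW.len_eq hωa] at this
    exact this
  have hwρ : wpr n (ρ ++ [r]) = a := by
    rw [wpr_concat, IsRW.wpr_eq hρ, mul_assoc, simpleT_mul_self, mul_one]
  have hge : permLen n a ≤ permLen n (a * simpleT n r) + 1 := by
    have := permLen_le hwρ
    rw [List.length_append, List.length_singleton, IsRW.len_eq hρ] at this
    exact this
  have hne := len_mul_ne (w := a) hr hrn
  rcases (by omega : permLen n (a * simpleT n r) = permLen n a + 1 ∨
      permLen n (a * simpleT n r) + 1 = permLen n a) with h | h
  · exact h
  · exfalso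
    apply ha
    refine ⟨ρ ++ [r], mk_IsRW hwρ ?_, by simp⟩
    rw [List.length_append, List.length_singleton, IsRW.len_eq hρ, h]

end SW11

open SW11 in
/-- If the letter `r` lies in neither `supp(a)` nor `supp(b)`, then
`a ≤ b`, `s_r a ≤ s_r b` and `a s_r ≤ b s_r` are equivalent in Bruhat order, and
`ℓ(b) - ℓ(a) = ℓ(s_r b) - ℓ(s_r a) = ℓ(b s_r) - ℓ(a s_r)`. -/
theorem stmt11 (n r : ℕ) (hr : 1 ≤ r) (hrn : r < n) (a b : Equiv.Perm (Fin n))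
    (ha : r ∉ permSupp n a) (hb : r ∉ permSupp n b) :
    ((bruhatLE n a b ↔ bruhatLE n (simpleT n r * a) (simpleT n r * b)) ∧
      (bruhatLE n a b ↔ bruhatLE n (a * simpleT n r) (b * simpleT n r))) ∧
    ((permLen n b : ℤ) - (permLen n a : ℤ) =
        (permLen n (simpleT n r * b) : ℤ) - (permLen n (simpleT n r * a) : ℤ) ∧
      (permLen n b : ℤ) - (permLen n a : ℤ) =
        (permLen n (b * simpleT n r) : ℤ) - (permLen n (a * simpleT n r) : ℤ)) := by
  obtain ⟨ωb, hωb⟩ := exists_reduced b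
  have hrb : r ∉ ωb := not_mem_reduced hb hωb
  have hQa : BlockP n r a := blockP_of_not_supp ha
  have hLa : permLen n (simpleT n r * a) = permLen n a + 1 := len_left_succ hr hrn ha
  have hLb : permLen n (simpleT n r * b) = permLen n b + 1 := len_left_succ hr hrn hb
  have hRa : permLen n (a * simpleT n r) = permLen n a + 1 := len_right_succ hr hrn ha
  have hRb : permLen n (b * simpleT n r) = permLen n b + 1 := len_right_succ hr hrn hb
  refine ⟨⟨⟨?_, ?_⟩, ⟨?_, ?_⟩⟩, ?_, ?_⟩
  · -- a ≤ b → s_r a ≤ s_r b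
    rintro ⟨ρ, ω, h1, h2, hs⟩
    refine ⟨r :: ρ, r :: ω, ?_, ?_, hs.cons₂ r⟩
    · exact mk_IsRW (by rw [wpr_cons, IsRW.wpr_eq h1])
        (by rw [List.length_cons, IsRW.len_eq h1, hLa])
    · exact mk_IsRW (by rw [wpr_cons, IsRW.wpr_eq h2])
        (by rw [List.length_cons, IsRW.len_eq h2, hLb])
  · -- s_r a ≤ s_r b → a ≤ b
    intro h
    have hword : wpr n (r :: ωb) = simpleT n r * b := by
      rw [wpr_cons, IsRW.wpr_eq hωb]
    obtain ⟨ρ', hsub, hred⟩ := le_to_subword h (r :: ωb) hword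
    have hrρ' : r ∈ ρ' := mem_of_word_left hr hrn hQa (IsRW.wpr_eq hred)
    cases hsub with
    | cons _ h' => exact absurd (h'.subset hrρ') hrb
    | cons_cons _ h' =>
      rename_i l₁
      have hπ : simpleT n r * wpr n l₁ = simpleT n r * a := by
        rw [← wpr_cons]; exact IsRW.wpr_eq hred
      have hπ' : wpr n l₁ = a := mul_left_cancel hπ
      have hlen := IsRW.len_eq hred
      rw [List.length_cons, hLa] at hlen
      exact ⟨l₁, ωb, mk_IsRW hπ' (by omega), hωb, h'⟩
  · -- a ≤ b → a s_r ≤ b s_r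
    rintro ⟨ρ, ω, h1, h2, hs⟩
    refine ⟨ρ ++ [r], ω ++ [r], ?_, ?_, hs.append (List.Sublist.refl [r])⟩
    · exact mk_IsRW (by rw [wpr_concat, IsRW.wpr_eq h1])
        (by rw [List.length_append, List.length_singleton, IsRW.len_eq h1, hRa])
    · exact mk_IsRW (by rw [wpr_concat, IsRW.wpr_eq h2])
        (by rw [List.length_append, List.length_singleton, IsRW.len_eq h2, hRb])
  · -- a s_r ≤ b s_r → a ≤ b
    intro h
    have hword : wpr n (ωb ++ [r]) = b * simpleT n r := by
      rw [wpr_concat, IsRW.wpr_eq hωb]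
    obtain ⟨ρ', hsub, hred⟩ := le_to_subword h (ωb ++ [r]) hword
    have hrρ' : r ∈ ρ' := mem_of_word_right hr hrn hQa (IsRW.wpr_eq hred)
    rw [List.sublist_append_iff] at hsub
    obtain ⟨l1, l2, heq, hl1, hl2⟩ := hsub
    rcases List.sublist_singleton.mp hl2 with rfl | rfl
    · rw [List.append_nil] at heq
      subst heq
      exact absurd (hl1.subset hrρ') hrb
    · subst heq
      have hπ : wpr n l1 * simpleT n r = a * simpleT n r := by
        rw [← wpr_concat]; exact IsRW.wpr_eq hred
      have hπ' : wpr n l1 = a := mul_right_cancel hπ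
      have hlen := IsRW.len_eq hred
      rw [List.length_append, List.length_singleton, hRa] at hlen
      exact ⟨l1, ωb, mk_IsRW hπ' (by omega), hωb, hl1⟩
  · rw [hLa, hLb]; push_cast; ring
  · rw [hRa, hRb]; push_cast; ring
end
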